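/- arXiv:1503.07222 — 10 statements merged into one kernel-verified Lean document; each statement's English description precedes it below -/
import Mathlib

section
/- Let E be a real inner product space, let Δ : E → E and let g : E → ℝ be a convex function such that g has gradient Δ(x) at every point x ∈ E, with g(x) ≥ 0 for all x and g(0) = 0. Fix ρ ∈ (0,1], an integer j ≥ 1, and a sequence y : ℕ → E; write ȳ : ℤ → E for the zero-extension of y (ȳ_m = y_m for m ≥ 0 and ȳ_m = 0 for m < 0). Then for every T ∈ ℕ, ∑_{k=0}^{T} ρ^{-2k} ⟨Δ(y_k), y_k − ρ^{2j} ȳ_{k−j}⟩ ≥ 0. -/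
/-!
With the weighted potential `A m = ρ^(-2m) g(ȳ_m)`, each term of the sum dominates
`A k - A (k - j)`: the gradient inequality gives `g x - g z ≤ ⟪Δ x, x - z⟫`, and convexity with
`g 0 = 0` gives `g (ρ^(2j) v) ≤ ρ^(2j) g v` since `ρ^(2j) ≤ 1`. Summing, the shifted potentials
are a sub-sum of the unshifted ones (`A` vanishes at negative times and is nonnegative).
-/

open RealInnerProductSpace Finset

theorem ConvexOn.add_le_of_hasFDerivAt {E : Type*} [NormedAddCommGroup E] [NormedSpace ℝ E]
    {s : Set E} {f : E → ℝ} {f' : E →L[ℝ] ℝ} {x z : E} (hf : ConvexOn ℝ s f)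
    (hx : x ∈ s) (hz : z ∈ s) (hfx : HasFDerivAt f f' x) :
    f x + f' (z - x) ≤ f z := by
  let φ : ℝ → ℝ := fun t => f (AffineMap.lineMap x z t)
  have hφ : ConvexOn ℝ (AffineMap.lineMap x z ⁻¹' s) φ := hf.comp_affineMap _
  have hline : HasDerivAt (fun t : ℝ => AffineMap.lineMap x z t) (z - x) 0 := by
    simpa [AffineMap.lineMap_apply_module'] using
      ((hasDerivAt_id (0 : ℝ)).smul_const (z - x)).add_const x
  have hφ' : HasDerivAt φ (f' (z - x)) 0 := by
    refine HasFDerivAt.comp_hasDerivAt (f := fun t : ℝ => AffineMap.lineMap x z t) 0 ?_ hline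
    simpa using hfx
  have := hφ.le_slope_of_hasDerivAt (by simpa using hx) (by simpa using hz) one_pos hφ'
  simp only [φ, slope_def_field, AffineMap.lineMap_apply_one, AffineMap.lineMap_apply_zero,
    sub_zero, div_one] at this
  linarith

theorem ConvexOn.map_smul_le {E : Type*} [AddCommGroup E] [Module ℝ E] {s : Set E} {f : E → ℝ}
    (hf : ConvexOn ℝ s f) (h0 : (0 : E) ∈ s) (hf0 : f 0 ≤ 0) {v : E} (hv : v ∈ s) {t : ℝ}
    (ht : t ∈ Set.Icc (0 : ℝ) 1) : f (t • v) ≤ t * f v := by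
  have := hf.2 hv h0 ht.1 (sub_nonneg.2 ht.2) (add_sub_cancel t 1)
  simp only [smul_zero, add_zero, smul_eq_mul] at this
  nlinarith [ht.2]

theorem Finset.sum_range_comp_sub_le {M : Type*} [AddCommMonoid M] [PartialOrder M]
    [IsOrderedAddMonoid M] {f : ℤ → M} (hf : ∀ m, 0 ≤ f m) (hneg : ∀ m < 0, f m = 0)
    (N j : ℕ) : ∑ k ∈ range N, f (k - j) ≤ ∑ k ∈ range N, f k := by
  induction j generalizing f with
  | zero => simp
  | succ j ih =>
    calc ∑ k ∈ range N, f (k - (j + 1 : ℕ)) = ∑ k ∈ range N, f (k - j - 1) := by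
          refine sum_congr rfl fun k _ => congrArg f ?_
          push_cast; ring
      _ ≤ ∑ k ∈ range N, f (k - 1) :=
          ih (f := fun m => f (m - 1)) (fun m => hf _) (fun m hm => hneg _ (by omega))
      _ ≤ ∑ k ∈ range N, f k := by
          cases N with
          | zero => simp
          | succ n =>
            rw [sum_range_succ', sum_range_succ]
            simp only [Nat.cast_add, Nat.cast_one, add_sub_cancel_right, Nat.cast_zero, zero_sub,
              hneg (-1) (by norm_num), add_zero]
            exact le_add_of_nonneg_right (hf _)

theorem ConvexOn.sub_mul_le_inner_sub_smul {E : Type*} [NormedAddCommGroup E]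
    [InnerProductSpace ℝ E] {g : E → ℝ} (hg : ConvexOn ℝ Set.univ g) (hg0 : g 0 ≤ 0)
    {x d : E} (hgx : HasFDerivAt g (innerSL ℝ d) x) (v : E) {t : ℝ}
    (ht : t ∈ Set.Icc (0 : ℝ) 1) : g x - t * g v ≤ ⟪d, x - t • v⟫ := by
  have hgrad := hg.add_le_of_hasFDerivAt (Set.mem_univ x) (Set.mem_univ (t • v)) hgx
  have hscale := hg.map_smul_le (Set.mem_univ 0) hg0 (Set.mem_univ v) ht
  rw [innerSL_apply_apply, ← neg_sub, inner_neg_right] at hgrad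
  linarith

theorem off_by_j_zames_falb_rho_iqc_general
    {E : Type*} [NormedAddCommGroup E] [InnerProductSpace ℝ E]
    (Δ : E → E) (g : E → ℝ)
    (hconv : ConvexOn ℝ Set.univ g)
    (hgrad : ∀ x : E, HasFDerivAt g (innerSL ℝ (Δ x)) x)
    (hg_nonneg : ∀ x : E, 0 ≤ g x) (hg_zero : g 0 = 0)
    (ρ : ℝ) (hρ : ρ ∈ Set.Ioc (0 : ℝ) 1)
    (j : ℕ)
    (y : ℕ → E) (ybar : ℤ → E)
    (hybar_nat : ∀ m : ℕ, ybar (m : ℤ) = y m)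
    (hybar_neg : ∀ m : ℤ, m < 0 → ybar m = 0)
    (T : ℕ) :
    0 ≤ ∑ k ∈ Finset.range (T + 1),
        ρ ^ (-(2 * (k : ℤ))) *
          ⟪Δ (y k), y k - ρ ^ (2 * j) • ybar ((k : ℤ) - (j : ℤ))⟫ := by
  obtain ⟨hρ0, hρ1⟩ := hρ
  set A : ℤ → ℝ := fun m => ρ ^ (-(2 * m)) * g (ybar m)
  have hA_nonneg (m : ℤ) : 0 ≤ A m := mul_nonneg (by positivity) (hg_nonneg _)
  have hA_neg (m : ℤ) (hm : m < 0) : A m = 0 := by simp [A, hybar_neg m hm, hg_zero]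
  have hterm (k : ℕ) : A k - A (k - j) ≤
      ρ ^ (-(2 * (k : ℤ))) * ⟪Δ (y k), y k - ρ ^ (2 * j) • ybar ((k : ℤ) - (j : ℤ))⟫ := by
    have hshift : A (k - j) = ρ ^ (-(2 * (k : ℤ))) * (ρ ^ (2 * j) * g (ybar (k - j))) := by
      rw [← mul_assoc, ← zpow_natCast, ← zpow_add₀ hρ0.ne']
      simp only [A]
      congr 2
      push_cast
      ring
    rw [hshift, show A k = ρ ^ (-(2 * (k : ℤ))) * g (y k) by simp [A, hybar_nat], ← mul_sub]
    exact mul_le_mul_of_nonneg_left (hconv.sub_mul_le_inner_sub_smul hg_zero.le (hgrad _) _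
      ⟨by positivity, pow_le_one₀ hρ0.le hρ1⟩) (by positivity)
  calc 0 ≤ ∑ k ∈ range (T + 1), (A k - A (k - j)) := by
        rw [sum_sub_distrib, sub_nonneg]
        exact sum_range_comp_sub_le hA_nonneg hA_neg _ _
    _ ≤ _ := sum_le_sum fun k _ => hterm k

/-- Off-by-`j` Zames–Falb ρ-IQC (time domain) for a monotone gradient nonlinearity:
every partial sum of the weighted IQC expression is nonnegative. Here `⟪·, ·⟫` is the
real inner product of `E` and `ybar` is the zero-extension of `y` to `ℤ`. -/
theorem off_by_j_zames_falb_rho_iqc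
    {E : Type*} [NormedAddCommGroup E] [InnerProductSpace ℝ E]
    (Δ : E → E) (g : E → ℝ)
    (hconv : ConvexOn ℝ Set.univ g)
    (hgrad : ∀ x : E, HasFDerivAt g (innerSL ℝ (Δ x)) x)
    (hg_nonneg : ∀ x : E, 0 ≤ g x) (hg_zero : g 0 = 0)
    (ρ : ℝ) (hρ : ρ ∈ Set.Ioc (0 : ℝ) 1)
    (j : ℕ) (hj : 1 ≤ j)
    (y : ℕ → E) (ybar : ℤ → E)
    (hybar_nat : ∀ m : ℕ, ybar (m : ℤ) = y m)
    (hybar_neg : ∀ m : ℤ, m < 0 → ybar m = 0)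
    (T : ℕ) :
    0 ≤ ∑ k ∈ Finset.range (T + 1),
        ρ ^ (-(2 * (k : ℤ))) *
          ⟪Δ (y k), y k - ρ ^ (2 * j) • ybar ((k : ℤ) - (j : ℤ))⟫ :=
  off_by_j_zames_falb_rho_iqc_general Δ g hconv hgrad hg_nonneg hg_zero ρ hρ j y ybar hybar_nat
    hybar_neg T
end

section
/- Let E be a real inner product space, let Δ : E → E and let g : E → ℝ be a convex function such that g has gradient Δ(x) at every point x ∈ E, with g(x) ≥ 0 for all x and g(0) = 0. Fix ρ ∈ (0,1], an integer j ≥ 1, and a sequence y : ℕ → E with zero-extension ȳ. Then for every T ∈ ℕ, ∑_{k=0}^{T} ρ^{-2k} ⟨Δ(y_k), y_k − ρ^{2j} ȳ_{k−j}⟩ ≥ ∑_{k=max(T−j+1,0)}^{T} ρ^{-2k} g(y_k), and in particular the right-hand side is nonnegative. -/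
/-!
With `W m = ρ^{-2m} g(ȳ_m)`, each term of the IQC sum dominates the increment `W k - W (k - j)`:
the gradient inequality gives `g(y_k) - g(ρ^{2j} ȳ_{k-j}) ≤ ⟨Δ(y_k), y_k - ρ^{2j} ȳ_{k-j}⟩`, and
convexity with `g 0 = 0` gives `g(ρ^{2j} v) ≤ ρ^{2j} g(v)`. Since `W` vanishes at negative
indices, the increments telescope to the last `j` values of `W`.
-/

open RealInnerProductSpace Finset

theorem ConvexOn.add_apply_sub_le_of_hasFDerivAt {E : Type*} [NormedAddCommGroup E]
    [NormedSpace ℝ E] {g : E → ℝ} {g' : E →L[ℝ] ℝ} {x : E}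
    (hg : ConvexOn ℝ Set.univ g) (hg' : HasFDerivAt g g' x) (z : E) :
    g x + g' (z - x) ≤ g z := by
  have hline : ConvexOn ℝ Set.univ (g ∘ AffineMap.lineMap (k := ℝ) x z) := by
    simpa using hg.comp_affineMap (AffineMap.lineMap (k := ℝ) x z)
  have hderiv : HasDerivAt (g ∘ AffineMap.lineMap (k := ℝ) x z) (g' (z - x)) 0 := by
    refine HasFDerivAt.comp_hasDerivAt (0 : ℝ) ?_ AffineMap.hasDerivAt_lineMap
    simpa using hg'
  have := hline.le_slope_of_hasDerivAt (Set.mem_univ 0) (Set.mem_univ 1) one_pos hderiv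
  simp only [slope_def_field, Function.comp_apply, AffineMap.lineMap_apply_zero,
    AffineMap.lineMap_apply_one, sub_zero, div_one] at this
  linarith

theorem ConvexOn.apply_smul_le_mul {E : Type*} [AddCommGroup E] [Module ℝ E] {g : E → ℝ}
    {s : Set E} {v : E} {a : ℝ} (hg : ConvexOn ℝ s g) (h0 : (0 : E) ∈ s) (hv : v ∈ s)
    (hg0 : g 0 ≤ 0) (ha₀ : 0 ≤ a) (ha₁ : a ≤ 1) :
    g (a • v) ≤ a * g v := by
  have := hg.2 hv h0 ha₀ (sub_nonneg.2 ha₁) (add_sub_cancel a 1)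
  simp only [smul_zero, add_zero, smul_eq_mul] at this
  nlinarith

theorem ConvexOn.sub_mul_le_inner_sub {E : Type*} [NormedAddCommGroup E] [InnerProductSpace ℝ E]
    {g : E → ℝ} {d x : E} {a : ℝ} (hg : ConvexOn ℝ Set.univ g)
    (hd : HasFDerivAt g (innerSL ℝ d) x) (hg0 : g 0 ≤ 0) (ha₀ : 0 ≤ a) (ha₁ : a ≤ 1) (v : E) :
    g x - a * g v ≤ ⟪d, x - a • v⟫ := by
  have hgrad_ineq := hg.add_apply_sub_le_of_hasFDerivAt hd (a • v)
  have hscale := hg.apply_smul_le_mul (Set.mem_univ 0) (Set.mem_univ v) hg0 ha₀ ha₁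
  rw [innerSL_apply_apply, ← neg_sub, inner_neg_right] at hgrad_ineq
  linarith

theorem sum_range_comp_sub_eq {M : Type*} [AddCommMonoid M] {W : ℤ → M}
    (hW : ∀ m < 0, W m = 0) (j n : ℕ) :
    ∑ k ∈ range n, W (k - j) = ∑ k ∈ range (n - j), W k := by
  induction n with
  | zero => simp
  | succ n ih =>
    rw [sum_range_succ, ih]
    rcases lt_or_ge n j with h | h
    · rw [hW _ (by omega), add_zero, Nat.sub_eq_zero_of_le h.le, Nat.sub_eq_zero_of_le h]
    · rw [Nat.sub_add_comm h, sum_range_succ, Nat.cast_sub h]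

theorem sum_range_sub_comp_sub_eq_sum_Ico {M : Type*} [AddCommGroup M] {W : ℤ → M}
    (hW : ∀ m < 0, W m = 0) (j n : ℕ) :
    ∑ k ∈ range n, (W k - W (k - j)) = ∑ k ∈ Ico (n - j) n, W k := by
  rw [sum_sub_distrib, sum_range_comp_sub_eq hW,
    ← sum_range_add_sum_Ico (fun k : ℕ ↦ W k) (n.sub_le j), add_sub_cancel_left]

theorem off_by_j_zames_falb_partial_sum_bound_general
    {E : Type*} [NormedAddCommGroup E] [InnerProductSpace ℝ E]
    (Δ : E → E) (g : E → ℝ)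
    (hconv : ConvexOn ℝ Set.univ g)
    (hgrad : ∀ x : E, HasFDerivAt g (innerSL ℝ (Δ x)) x)
    (hg_nonneg : ∀ x : E, 0 ≤ g x) (hg_zero : g 0 = 0)
    (ρ : ℝ) (hρ : ρ ∈ Set.Ioc (0 : ℝ) 1)
    (j : ℕ)
    (y : ℕ → E) (ybar : ℤ → E)
    (hybar_nat : ∀ m : ℕ, ybar (m : ℤ) = y m)
    (hybar_neg : ∀ m : ℤ, m < 0 → ybar m = 0)
    (T : ℕ) :
    (∑ k ∈ Finset.Icc (T + 1 - j) T, ρ ^ (-(2 * (k : ℤ))) * g (y k)) ≤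
      (∑ k ∈ Finset.range (T + 1),
        ρ ^ (-(2 * (k : ℤ))) *
          ⟪Δ (y k), y k - ρ ^ (2 * j) • ybar ((k : ℤ) - (j : ℤ))⟫) ∧
    0 ≤ ∑ k ∈ Finset.Icc (T + 1 - j) T, ρ ^ (-(2 * (k : ℤ))) * g (y k) := by
  obtain ⟨hρ₀, hρ₁⟩ := hρ
  set W : ℤ → ℝ := fun m ↦ ρ ^ (-(2 * m)) * g (ybar m)
  have hW_neg : ∀ m < 0, W m = 0 := fun m hm ↦ by simp [W, hybar_neg m hm, hg_zero]
  have hW_nat : ∀ k : ℕ, W k = ρ ^ (-(2 * (k : ℤ))) * g (y k) := fun k ↦ by simp [W, hybar_nat]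
  have hW_step : ∀ k : ℕ, W k - W (k - j) ≤
      ρ ^ (-(2 * (k : ℤ))) * ⟪Δ (y k), y k - ρ ^ (2 * j) • ybar ((k : ℤ) - j)⟫ := by
    intro k
    have hweight : ρ ^ (-(2 * ((k : ℤ) - j))) = ρ ^ (-(2 * (k : ℤ))) * ρ ^ (2 * j) := by
      rw [← zpow_natCast, ← zpow_add₀ hρ₀.ne']
      push_cast
      ring_nf
    calc W k - W (k - j)
        = ρ ^ (-(2 * (k : ℤ))) * (g (y k) - ρ ^ (2 * j) * g (ybar (k - j))) := by
          rw [hW_nat]; simp only [W, hweight]; ring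
      _ ≤ _ := by
          gcongr
          exact hconv.sub_mul_le_inner_sub (hgrad (y k)) hg_zero.le (by positivity)
            (pow_le_one₀ hρ₀.le hρ₁) _
  refine ⟨?_, sum_nonneg fun k _ ↦ mul_nonneg (zpow_pos hρ₀ _).le (hg_nonneg _)⟩
  calc ∑ k ∈ Icc (T + 1 - j) T, ρ ^ (-(2 * (k : ℤ))) * g (y k)
      = ∑ k ∈ range (T + 1), (W k - W (k - j)) := by
        rw [sum_range_sub_comp_sub_eq_sum_Ico hW_neg, Ico_add_one_right_eq_Icc]
        exact sum_congr rfl fun k _ ↦ (hW_nat k).symm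
    _ ≤ _ := sum_le_sum fun k _ ↦ hW_step k

/-- Key intermediate estimate in the proof of the off-by-`j` Zames–Falb ρ-IQC:
the weighted IQC partial sum dominates the tail sum `∑_{k=max(T−j+1,0)}^{T} ρ^{-2k} g(y_k)`
of the potential values, and that tail sum is nonnegative. (In `ℕ`-subtraction,
`Finset.Icc (T + 1 - j) T` is exactly `{max (T − j + 1, 0), …, T}`.) -/
theorem off_by_j_zames_falb_partial_sum_bound
    {E : Type*} [NormedAddCommGroup E] [InnerProductSpace ℝ E]
    (Δ : E → E) (g : E → ℝ)
    (hconv : ConvexOn ℝ Set.univ g)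
    (hgrad : ∀ x : E, HasFDerivAt g (innerSL ℝ (Δ x)) x)
    (hg_nonneg : ∀ x : E, 0 ≤ g x) (hg_zero : g 0 = 0)
    (ρ : ℝ) (hρ : ρ ∈ Set.Ioc (0 : ℝ) 1)
    (j : ℕ) (hj : 1 ≤ j)
    (y : ℕ → E) (ybar : ℤ → E)
    (hybar_nat : ∀ m : ℕ, ybar (m : ℤ) = y m)
    (hybar_neg : ∀ m : ℤ, m < 0 → ybar m = 0)
    (T : ℕ) :
    (∑ k ∈ Finset.Icc (T + 1 - j) T, ρ ^ (-(2 * (k : ℤ))) * g (y k)) ≤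
      (∑ k ∈ Finset.range (T + 1),
        ρ ^ (-(2 * (k : ℤ))) *
          ⟪Δ (y k), y k - ρ ^ (2 * j) • ybar ((k : ℤ) - (j : ℤ))⟫) ∧
    0 ≤ ∑ k ∈ Finset.Icc (T + 1 - j) T, ρ ^ (-(2 * (k : ℤ))) * g (y k) :=
  off_by_j_zames_falb_partial_sum_bound_general Δ g hconv hgrad hg_nonneg hg_zero ρ hρ j y ybar
    hybar_nat hybar_neg T
end

section
/- Let E be a real inner product space, let Δ : E → E and let g : E → ℝ be a convex function such that g has gradient Δ(x) at every point x ∈ E, with g(x) ≥ 0 for all x and g(0) = 0. Fix ρ ∈ (0,1] and a sequence y : ℕ → E. Let h : ℕ → ℝ satisfy h_k ≥ 0 for all k, with the sequence (ρ^{-2k} h_k) summable and ∑_{k=0}^{∞} ρ^{-2k} h_k ≤ 1. Then for every T ∈ ℕ, ∑_{k=0}^{T} ρ^{-2k} ⟨Δ(y_k), y_k − ∑_{i=0}^{k} h_i y_{k−i}⟩ ≥ 0. -/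
/-!
Convexity gives the subgradient inequality `g x - g z ≤ ⟪Δ x, x - z⟫`; with `g 0 = 0` and
`∑ hᵢ ≤ 1` it bounds each inner product below by `g (y k) - ∑ hᵢ g (y (k - i))`. Writing
`r = ρ⁻²`, the factorisation `r ^ k = r ^ i * r ^ (k - i)` turns the weighted sum of these bounds
into `∑ Gₖ` minus a truncated convolution of `r ^ i * hᵢ` with `Gₖ = r ^ k * g (y k) ≥ 0`, and that
convolution is at most `(∑ r ^ i * hᵢ) * ∑ Gₖ ≤ ∑ Gₖ`.
-/

open RealInnerProductSpace Finset

theorem ConvexOn.add_fderiv_sub_le {E : Type*} [NormedAddCommGroup E] [NormedSpace ℝ E]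
    {s : Set E} {f : E → ℝ} {f' : E →L[ℝ] ℝ} {x z : E} (hf : ConvexOn ℝ s f) (hx : x ∈ s)
    (hz : z ∈ s) (hf' : HasFDerivAt f f' x) : f x + f' (z - x) ≤ f z := by
  set ℓ : ℝ →ᵃ[ℝ] E := AffineMap.lineMap x z
  have hderiv : HasDerivAt (f ∘ ℓ) (f' (z - x)) 0 :=
    (by simpa [ℓ] using hf' : HasFDerivAt f f' (ℓ 0)).comp_hasDerivAt 0
      AffineMap.hasDerivAt_lineMap
  have := (hf.comp_affineMap ℓ).le_slope_of_hasDerivAt (by simpa [ℓ] using hx)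
    (by simpa [ℓ] using hz) one_pos hderiv
  simp only [slope_def_field, ℓ, Function.comp_apply, AffineMap.lineMap_apply_zero,
    AffineMap.lineMap_apply_one, sub_zero, div_one] at this
  linarith

theorem sum_range_convolution_le_sum_mul_sum {R : Type*} [CommSemiring R] [PartialOrder R]
    [IsOrderedRing R] {a b : ℕ → R} (ha : ∀ i, 0 ≤ a i) (hb : ∀ j, 0 ≤ b j) (n : ℕ) :
    ∑ k ∈ range n, ∑ i ∈ range (k + 1), a i * b (k - i) ≤
      (∑ i ∈ range n, a i) * ∑ j ∈ range n, b j := by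
  have hswap := sum_Ico_Ico_comm 0 n fun i k => a i * b (k - i)
  simp only [Nat.Ico_zero_eq_range] at hswap
  rw [← hswap, sum_mul]
  refine sum_le_sum fun i _ => ?_
  rw [← mul_sum, sum_Ico_eq_sum_range]
  simp only [Nat.add_sub_cancel_left]
  exact mul_le_mul_of_nonneg_left
    (sum_le_sum_of_subset_of_nonneg (range_subset_range.2 (Nat.sub_le _ _)) fun j _ _ => hb j)
    (ha i)

theorem sum_range_pow_mul_sub_convolution_nonneg {R : Type*} [CommRing R] [PartialOrder R]
    [IsOrderedRing R] {r : R} (hr : 0 ≤ r) {c u : ℕ → R} (hc : ∀ i, 0 ≤ c i)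
    (hu : ∀ j, 0 ≤ u j) {n : ℕ} (hcn : ∑ i ∈ range n, r ^ i * c i ≤ 1) :
    0 ≤ ∑ k ∈ range n, r ^ k * (u k - ∑ i ∈ range (k + 1), c i * u (k - i)) := by
  have hsplit (k : ℕ) : r ^ k * ∑ i ∈ range (k + 1), c i * u (k - i) =
      ∑ i ∈ range (k + 1), r ^ i * c i * (r ^ (k - i) * u (k - i)) := by
    rw [mul_sum]
    refine sum_congr rfl fun i hi => ?_
    rw [← pow_mul_pow_sub r (mem_range_succ_iff.1 hi)]
    ring
  have hru (j : ℕ) : 0 ≤ r ^ j * u j := mul_nonneg (pow_nonneg hr j) (hu j)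
  simp only [mul_sub, sum_sub_distrib, hsplit, sub_nonneg]
  calc ∑ k ∈ range n, ∑ i ∈ range (k + 1), r ^ i * c i * (r ^ (k - i) * u (k - i))
      ≤ (∑ i ∈ range n, r ^ i * c i) * ∑ j ∈ range n, r ^ j * u j :=
        sum_range_convolution_le_sum_mul_sum (fun i => mul_nonneg (pow_nonneg hr i) (hc i)) hru n
    _ ≤ ∑ j ∈ range n, r ^ j * u j := mul_le_of_le_one_left (sum_nonneg fun j _ => hru j) hcn

theorem sub_sum_mul_le_inner_sub_sum_smul {E ι : Type*} [NormedAddCommGroup E]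
    [InnerProductSpace ℝ E] {g : E → ℝ} {d x : E} (hd : ∀ z, g x - g z ≤ ⟪d, x - z⟫)
    (hg₀ : g 0 = 0) {s : Finset ι} {c : ι → ℝ} (hc : ∀ i ∈ s, 0 ≤ c i)
    (hc₁ : ∑ i ∈ s, c i ≤ 1) (z : ι → E) :
    g x - ∑ i ∈ s, c i * g (z i) ≤ ⟪d, x - ∑ i ∈ s, c i • z i⟫ := by
  have hx : x - ∑ i ∈ s, c i • z i =
      ∑ i ∈ s, c i • (x - z i) + (1 - ∑ i ∈ s, c i) • (x - 0) := by
    simp only [smul_sub, sum_sub_distrib, ← sum_smul, sub_smul, one_smul, sub_zero]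
    abel
  calc g x - ∑ i ∈ s, c i * g (z i)
      = ∑ i ∈ s, c i * (g x - g (z i)) + (1 - ∑ i ∈ s, c i) * (g x - g 0) := by
        simp only [hg₀, mul_sub, sum_sub_distrib, ← sum_mul]
        ring
    _ ≤ ∑ i ∈ s, c i * ⟪d, x - z i⟫ + (1 - ∑ i ∈ s, c i) * ⟪d, x - 0⟫ :=
        add_le_add (sum_le_sum fun i hi => mul_le_mul_of_nonneg_left (hd _) (hc i hi))
          (mul_le_mul_of_nonneg_left (hd 0) (sub_nonneg.2 hc₁))
    _ = ⟪d, x - ∑ i ∈ s, c i • z i⟫ := by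
        simp only [hx, inner_add_right, inner_sum, inner_smul_right]

/-- General Zames–Falb ρ-IQC (time domain) for a monotone gradient nonlinearity:
if the impulse response `h` is nonnegative and satisfies the ρ-weighted ℓ1 constraint
`∑_{k} ρ^{-2k} h_k ≤ 1`, then every partial sum of the weighted IQC expression is
nonnegative.  Here `∑_{i=0}^{k} h_i y_{k−i}` is the truncated convolution of `h` with `y`. -/
theorem general_zames_falb_rho_iqc
    {E : Type*} [NormedAddCommGroup E] [InnerProductSpace ℝ E]
    (Δ : E → E) (g : E → ℝ)
    (hconv : ConvexOn ℝ Set.univ g)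
    (hgrad : ∀ x : E, HasFDerivAt g (innerSL ℝ (Δ x)) x)
    (hg_nonneg : ∀ x : E, 0 ≤ g x) (hg_zero : g 0 = 0)
    (ρ : ℝ) (hρ : ρ ∈ Set.Ioc (0 : ℝ) 1)
    (y : ℕ → E)
    (h : ℕ → ℝ) (hh_nonneg : ∀ k : ℕ, 0 ≤ h k)
    (hh_summable : Summable (fun k : ℕ => ρ ^ (-(2 * (k : ℤ))) * h k))
    (hh_l1 : (∑' k : ℕ, ρ ^ (-(2 * (k : ℤ))) * h k) ≤ 1)
    (T : ℕ) :
    0 ≤ ∑ k ∈ Finset.range (T + 1),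
        ρ ^ (-(2 * (k : ℤ))) *
          ⟪Δ (y k), y k - ∑ i ∈ Finset.range (k + 1), h i • y (k - i)⟫ := by
  obtain ⟨hρ₀, hρ₁⟩ := hρ
  have hweight (k : ℕ) : ρ ^ (-(2 * (k : ℤ))) = (ρ ^ 2)⁻¹ ^ k := by
    rw [zpow_neg, zpow_mul, zpow_two, ← inv_pow]
    norm_cast
    ring
  simp only [hweight] at hh_summable hh_l1 ⊢
  have hr : 1 ≤ (ρ ^ 2)⁻¹ := one_le_inv₀ (by positivity) |>.2 (pow_le_one₀ hρ₀.le hρ₁)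
  have hl1 (n : ℕ) : ∑ i ∈ range n, (ρ ^ 2)⁻¹ ^ i * h i ≤ 1 :=
    (hh_summable.sum_le_tsum _ fun i _ => mul_nonneg (by positivity) (hh_nonneg i)).trans hh_l1
  have hh₁ (n : ℕ) : ∑ i ∈ range n, h i ≤ 1 :=
    (sum_le_sum fun i _ => le_mul_of_one_le_left (hh_nonneg i) (one_le_pow₀ hr)).trans (hl1 n)
  have hsubgrad (x z : E) : g x - g z ≤ ⟪Δ x, x - z⟫ := by
    have := hconv.add_fderiv_sub_le (Set.mem_univ x) (Set.mem_univ z) (hgrad x)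
    rw [innerSL_apply_apply, ← neg_sub, inner_neg_right] at this
    linarith
  calc (0 : ℝ)
      ≤ ∑ k ∈ range (T + 1),
          (ρ ^ 2)⁻¹ ^ k * (g (y k) - ∑ i ∈ range (k + 1), h i * g (y (k - i))) :=
        sum_range_pow_mul_sub_convolution_nonneg (by positivity) hh_nonneg
          (fun j => hg_nonneg (y j)) (hl1 _)
    _ ≤ _ := sum_le_sum fun k _ => mul_le_mul_of_nonneg_left
        (sub_sum_mul_le_inner_sub_sum_smul (hsubgrad _) hg_zero (fun i _ => hh_nonneg i) (hh₁ _) _)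
        (by positivity)
end

section
/- Let E be a real inner product space and let 0 ≤ α ≤ β be reals. Let g : E → ℝ be differentiable with gradient map Δ : E → E (g has gradient Δ(x) at every x), and suppose g(0) = 0, Δ(0) = 0, the function x ↦ g(x) − (α/2)‖x‖² is convex, and the function x ↦ (β/2)‖x‖² − g(x) is convex. Fix ρ ∈ (0,1], an integer j ≥ 1, and a sequence y : ℕ → E. Define ũ_k = Δ(y_k) − α·y_k for k ≥ 0, and define ỹ : ℤ → E by ỹ_k = β·y_k − Δ(y_k) for k ≥ 0 and ỹ_k = 0 for k < 0. Then for every T ∈ ℕ, ∑_{k=0}^{T} ρ^{-2k} ⟨ũ_k, ỹ_k − ρ^{2j} ỹ_{k−j}⟩ ≥ 0. -/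
/-!
Put `f = g - (α/2)‖·‖²`, `φ = ∇f = Δ - α • id` and `L = β - α`. Then `f` is convex and
`L`-smooth, `ũ_k = φ (y k)` and `ỹ_k = L • y k - φ (y k)` for `k ≥ 0`. For such `f` the
interpolation inequality `‖φ b - φ a‖² ≤ 2L (f b - f a - ⟪φ a, b - a⟫)` says exactly that
`S = L f - ‖φ‖²/2` is a storage function: `⟪φ a, L b - φ b⟫ ≤ ⟪φ a, L a - φ a⟫ - S a + S b`.
Since `f 0 = 0` and `φ 0 = 0`, this also gives `0 ≤ S a ≤ ⟪φ a, L a - φ a⟫`. As `ρ^{2j} ≤ 1`,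
the `k`-th summand is then at least `ρ^{-2k} S (y k) - ρ^{-2(k-j)} S (y (k-j))` (the second term
being absent for `k < j`), and these lower bounds sum to a nonnegative quantity.
-/

open RealInnerProductSpace Finset Set

theorem ConvexOn.le_sub_of_hasFDerivAt {E : Type*} [NormedAddCommGroup E] [NormedSpace ℝ E]
    {s : Set E} {f : E → ℝ} {f' : E →L[ℝ] ℝ} {a b : E}
    (hf : ConvexOn ℝ s f) (ha : a ∈ s) (hb : b ∈ s) (hd : HasFDerivAt f f' a) :
    f' (b - a) ≤ f b - f a := by
  have hline : ConvexOn ℝ (AffineMap.lineMap (k := ℝ) a b ⁻¹' s)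
      (f ∘ AffineMap.lineMap (k := ℝ) a b) :=
    hf.comp_affineMap _
  have hderiv : HasDerivAt (f ∘ AffineMap.lineMap (k := ℝ) a b) (f' (b - a)) 0 := by
    rw [← AffineMap.lineMap_apply_zero a b (k := ℝ)] at hd
    exact hd.comp_hasDerivAt 0 AffineMap.hasDerivAt_lineMap
  simpa [slope_def_field] using
    hline.le_slope_of_hasDerivAt (by simpa) (by simpa) zero_lt_one hderiv

section SmoothConvex

variable {E : Type*} [NormedAddCommGroup E] [InnerProductSpace ℝ E] {f : E → ℝ} {φ : E → E}
  {L : ℝ}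

theorem ConvexOn.add_inner_le (hf : ConvexOn ℝ univ f) {a : E}
    (hφ : HasFDerivAt f (innerSL ℝ (φ a)) a) (b : E) :
    f a + ⟪φ a, b - a⟫ ≤ f b := by
  simpa [add_comm, le_sub_iff_add_le] using
    hf.le_sub_of_hasFDerivAt (mem_univ a) (mem_univ b) hφ

theorem le_add_inner_add_of_convexOn_sq_sub
    (hsm : ConvexOn ℝ univ (fun x => L / 2 * ‖x‖ ^ 2 - f x)) {a : E}
    (hφ : HasFDerivAt f (innerSL ℝ (φ a)) a) (b : E) :
    f b ≤ f a + ⟪φ a, b - a⟫ + L / 2 * ‖b - a‖ ^ 2 := by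
  have hd := ((hasStrictFDerivAt_norm_sq a).hasFDerivAt.const_mul (L / 2)).sub hφ
  have h := hsm.le_sub_of_hasFDerivAt (mem_univ a) (mem_univ b) hd
  simp only [sub_apply, smul_apply, innerSL_apply_apply, smul_eq_mul, nsmul_eq_mul,
    Nat.cast_ofNat, inner_sub_right, real_inner_self_eq_norm_sq] at h
  rw [norm_sub_sq_real, real_inner_comm a b, inner_sub_right]
  linear_combination h

theorem norm_sub_sq_le_of_convexOn (hL : 0 ≤ L) (hf : ConvexOn ℝ univ f)
    (hsm : ConvexOn ℝ univ (fun x => L / 2 * ‖x‖ ^ 2 - f x))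
    (hφ : ∀ x, HasFDerivAt f (innerSL ℝ (φ x)) x) (a b : E) :
    ‖φ b - φ a‖ ^ 2 ≤ 2 * L * (f b - f a - ⟪φ a, b - a⟫) := by
  set d := φ b - φ a
  set D := f b - f a - ⟪φ a, b - a⟫
  -- the lower and upper bounds on `f` at `b - t • d` leave a quadratic in `t` that is
  -- nonnegative, so its discriminant is not positive
  have hquad : ∀ t : ℝ, 0 ≤ (L / 2 * ‖d‖ ^ 2) * (t * t) + (-‖d‖ ^ 2) * t + D := by
    intro t
    have lower := hf.add_inner_le (hφ a) (b - t • d)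
    have upper := le_add_inner_add_of_convexOn_sq_sub hsm (hφ b) (b - t • d)
    have hd : ⟪φ b, d⟫ - ⟪φ a, d⟫ = ‖d‖ ^ 2 := by
      rw [← inner_sub_left, real_inner_self_eq_norm_sq]
    rw [sub_sub_cancel_left, inner_neg_right, real_inner_smul_right, norm_neg, norm_smul,
      Real.norm_eq_abs, mul_pow, sq_abs] at upper
    rw [sub_right_comm, inner_sub_right, real_inner_smul_right] at lower
    linear_combination lower + upper - t * hd
  have hD_nonneg : 0 ≤ D := by simpa using hquad 0
  have hdisc := discrim_le_zero hquad
  rw [discrim] at hdisc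
  nlinarith [mul_nonneg hL hD_nonneg, sq_nonneg ‖d‖]

end SmoothConvex

theorem sum_range_sub_shift_nonneg {M : Type*} [AddCommGroup M] [PartialOrder M]
    [IsOrderedAddMonoid M] (t : ℕ → M) (ht : ∀ k, 0 ≤ t k) (j N : ℕ) :
    0 ≤ ∑ k ∈ range N, (t k - if j ≤ k then t (k - j) else 0) := by
  have hshift : ∑ k ∈ range N, (if j ≤ k then t (k - j) else 0) = ∑ k ∈ range (N - j), t k := by
    induction N with
    | zero => simp
    | succ n ih =>
      rw [sum_range_succ, ih]
      by_cases hn : j ≤ n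
      · rw [if_pos hn, show n + 1 - j = n - j + 1 by omega, sum_range_succ]
      · rw [if_neg hn, add_zero, show n + 1 - j = n - j by omega]
  rw [sum_sub_distrib, hshift, sub_nonneg]
  exact sum_le_sum_of_subset_of_nonneg (range_subset_range.2 (Nat.sub_le N j)) fun k _ _ => ht k

section Storage

variable {E : Type*} [NormedAddCommGroup E] [InnerProductSpace ℝ E] {φ : E → E} {S : E → ℝ}
  {L : ℝ}

def IsZamesFalbStorage (L : ℝ) (φ : E → E) (S : E → ℝ) : Prop :=
  ∀ a b, ⟪φ a, L • b - φ b⟫ ≤ ⟪φ a, L • a - φ a⟫ - S a + S b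

noncomputable def zamesFalbStorage (L : ℝ) (f : E → ℝ) (φ : E → E) (x : E) : ℝ :=
  L * f x - ‖φ x‖ ^ 2 / 2

theorem isZamesFalbStorage_of_convexOn {f : E → ℝ} (hL : 0 ≤ L) (hf : ConvexOn ℝ univ f)
    (hsm : ConvexOn ℝ univ (fun x => L / 2 * ‖x‖ ^ 2 - f x))
    (hφ : ∀ x, HasFDerivAt f (innerSL ℝ (φ x)) x) :
    IsZamesFalbStorage L φ (zamesFalbStorage L f φ) := fun a b => by
  have h := norm_sub_sq_le_of_convexOn hL hf hsm hφ a b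
  rw [norm_sub_sq_real, real_inner_comm] at h
  simp only [zamesFalbStorage, inner_sub_right, real_inner_smul_right,
    real_inner_self_eq_norm_sq] at h ⊢
  linear_combination h / 2

namespace IsZamesFalbStorage

theorem nonneg (hS : IsZamesFalbStorage L φ S) (hS0 : S 0 = 0) (hφ0 : φ 0 = 0) (a : E) :
    0 ≤ S a := by
  simpa [hφ0, hS0] using hS 0 a

theorem le_inner (hS : IsZamesFalbStorage L φ S) (hS0 : S 0 = 0) (hφ0 : φ 0 = 0) (a : E) :
    S a ≤ ⟪φ a, L • a - φ a⟫ := by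
  simpa [hφ0, hS0] using hS a 0

theorem sum_zpow_mul_inner_nonneg (hS : IsZamesFalbStorage L φ S)
    (hS0 : S 0 = 0) (hφ0 : φ 0 = 0) {ρ : ℝ} (hρ : ρ ∈ Set.Ioc 0 1) (j : ℕ) (y : ℕ → E)
    (ytil : ℤ → E) (hytil_nat : ∀ k : ℕ, ytil k = L • y k - φ (y k))
    (hytil_neg : ∀ k : ℤ, k < 0 → ytil k = 0) (N : ℕ) :
    0 ≤ ∑ k ∈ range N,
      ρ ^ (-(2 * (k : ℤ))) * ⟪φ (y k), ytil k - ρ ^ (2 * j) • ytil ((k : ℤ) - j)⟫ := by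
  obtain ⟨hρ0, hρ1⟩ := hρ
  have hc : ∀ k : ℕ, 0 ≤ ρ ^ (-(2 * (k : ℤ))) := fun k => zpow_nonneg hρ0.le _
  set t : ℕ → ℝ := fun k => ρ ^ (-(2 * (k : ℤ))) * S (y k)
  have ht : ∀ k, 0 ≤ t k := fun k => mul_nonneg (hc k) (hS.nonneg hS0 hφ0 _)
  refine (sum_range_sub_shift_nonneg t ht j N).trans (sum_le_sum fun k _ => ?_)
  have hdiag := hS.le_inner hS0 hφ0 (y k)
  split_ifs with hjk
  · obtain ⟨m, rfl⟩ := Nat.exists_eq_add_of_le hjk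
    have hr0 : 0 ≤ ρ ^ (2 * j) := by positivity
    have hr1 : ρ ^ (2 * j) ≤ 1 := pow_le_one₀ hρ0.le hρ1
    have hweight : ρ ^ (-(2 * (m : ℤ))) = ρ ^ (-(2 * ((j + m : ℕ) : ℤ))) * ρ ^ (2 * j) := by
      rw [← zpow_natCast ρ (2 * j), ← zpow_add₀ hρ0.ne']
      push_cast
      ring_nf
    rw [show ((j + m : ℕ) : ℤ) - j = m by push_cast; ring, hytil_nat, hytil_nat,
      inner_sub_right, real_inner_smul_right]
    simp only [t, Nat.add_sub_cancel_left, hweight]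
    rw [mul_assoc, ← mul_sub]
    refine mul_le_mul_of_nonneg_left ?_ (hc _)
    nlinarith [mul_le_mul_of_nonneg_left (hS (y (j + m)) (y m)) hr0,
      mul_le_mul_of_nonneg_left hdiag (sub_nonneg.2 hr1)]
  · rw [hytil_neg ((k : ℤ) - j) (by omega), smul_zero, sub_zero, sub_zero, hytil_nat]
    exact mul_le_mul_of_nonneg_left hdiag (hc k)

end IsZamesFalbStorage

end Storage

theorem off_by_j_zames_falb_rho_iqc_slope_restricted_general
    {E : Type*} [NormedAddCommGroup E] [InnerProductSpace ℝ E]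
    (α β : ℝ) (hαβ : α ≤ β)
    (Δ : E → E) (g : E → ℝ)
    (hgrad : ∀ x : E, HasFDerivAt g (innerSL ℝ (Δ x)) x)
    (hg_zero : g 0 = 0) (hΔ_zero : Δ 0 = 0)
    (hconv_lower : ConvexOn ℝ Set.univ (fun x : E => g x - α / 2 * ‖x‖ ^ 2))
    (hconv_upper : ConvexOn ℝ Set.univ (fun x : E => β / 2 * ‖x‖ ^ 2 - g x))
    (ρ : ℝ) (hρ : ρ ∈ Set.Ioc (0 : ℝ) 1)
    (j : ℕ)
    (y : ℕ → E) (ytil : ℤ → E)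
    (hytil_nat : ∀ k : ℕ, ytil (k : ℤ) = β • y k - Δ (y k))
    (hytil_neg : ∀ k : ℤ, k < 0 → ytil k = 0)
    (T : ℕ) :
    0 ≤ ∑ k ∈ Finset.range (T + 1),
        ρ ^ (-(2 * (k : ℤ))) *
          ⟪Δ (y k) - α • y k, ytil (k : ℤ) - ρ ^ (2 * j) • ytil ((k : ℤ) - (j : ℤ))⟫ := by
  let f : E → ℝ := fun x => g x - α / 2 * ‖x‖ ^ 2
  let φ : E → E := fun x => Δ x - α • x
  have hφ : ∀ x, HasFDerivAt f (innerSL ℝ (φ x)) x := fun x =>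
    ((hgrad x).sub ((hasStrictFDerivAt_norm_sq x).hasFDerivAt.const_mul (α / 2))).congr_fderiv
      (by ext v; simp [φ]; ring)
  have hsmooth : ConvexOn ℝ univ (fun x => (β - α) / 2 * ‖x‖ ^ 2 - f x) := by
    convert hconv_upper using 2 with x
    ring
  have hytil : ∀ k : ℕ, ytil k = (β - α) • y k - φ (y k) := fun k => by
    rw [hytil_nat, sub_smul]
    simp only [φ]
    abel
  have hS := isZamesFalbStorage_of_convexOn (sub_nonneg.2 hαβ) hconv_lower hsmooth hφ
  exact hS.sum_zpow_mul_inner_nonneg (by simp [zamesFalbStorage, φ, hg_zero, hΔ_zero])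
    (by simp [φ, hΔ_zero]) hρ j y ytil hytil hytil_neg (T + 1)

/-- Off-by-`j` Zames–Falb ρ-IQC (time domain) for a gradient nonlinearity `Δ = ∇g`
slope-restricted on `[α,β]`, obtained via the substitution
`(y,u) ↦ (βy − u, u − αy)`.  Here `ỹ` (`ytil`) is the zero-extension to `ℤ` of
`k ↦ β • y k − Δ(y k)` and `ũ_k = Δ(y_k) − α • y_k`. -/
theorem off_by_j_zames_falb_rho_iqc_slope_restricted
    {E : Type*} [NormedAddCommGroup E] [InnerProductSpace ℝ E]
    (α β : ℝ) (hα : 0 ≤ α) (hαβ : α ≤ β)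
    (Δ : E → E) (g : E → ℝ)
    (hgrad : ∀ x : E, HasFDerivAt g (innerSL ℝ (Δ x)) x)
    (hg_zero : g 0 = 0) (hΔ_zero : Δ 0 = 0)
    (hconv_lower : ConvexOn ℝ Set.univ (fun x : E => g x - α / 2 * ‖x‖ ^ 2))
    (hconv_upper : ConvexOn ℝ Set.univ (fun x : E => β / 2 * ‖x‖ ^ 2 - g x))
    (ρ : ℝ) (hρ : ρ ∈ Set.Ioc (0 : ℝ) 1)
    (j : ℕ) (hj : 1 ≤ j)
    (y : ℕ → E) (ytil : ℤ → E)
    (hytil_nat : ∀ k : ℕ, ytil (k : ℤ) = β • y k - Δ (y k))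
    (hytil_neg : ∀ k : ℤ, k < 0 → ytil k = 0)
    (T : ℕ) :
    0 ≤ ∑ k ∈ Finset.range (T + 1),
        ρ ^ (-(2 * (k : ℤ))) *
          ⟪Δ (y k) - α • y k, ytil (k : ℤ) - ρ ^ (2 * j) • ytil ((k : ℤ) - (j : ℤ))⟫ :=
  off_by_j_zames_falb_rho_iqc_slope_restricted_general α β hαβ Δ g hgrad hg_zero hΔ_zero hconv_lower
    hconv_upper ρ hρ j y ytil hytil_nat hytil_neg T
end

section
/- Let 0 ≤ α ≤ β be reals and let Δ : ℝ → ℝ satisfy Δ(0) = 0 and be slope-restricted on [α,β], i.e. α(x−y)² ≤ (Δ(x)−Δ(y))(x−y) ≤ β(x−y)² for all x, y ∈ ℝ. Fix ρ ∈ (0,1], an integer j ≥ 1, and a sequence y : ℕ → ℝ. Define ũ_k = Δ(y_k) − α y_k for k ≥ 0, and define ỹ : ℤ → ℝ by ỹ_k = β y_k − Δ(y_k) for k ≥ 0 and ỹ_k = 0 for k < 0. Then for every T ∈ ℕ, ∑_{k=0}^{T} ρ^{-2k} ũ_k (ỹ_k − ρ^{2j} ỹ_{k−j}) ≥ 0.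 -/
/-!
Write `φ = Δ - α • id`, which is slope-restricted on `[0, L]` with `L = β - α`, and
`ψ = L • id - φ`, so that `ũ_k = φ (y k)` and `ỹ_k = ψ (y k)`. The Stieltjes potential
`H = ∫ φ dψ = L ∫₀ φ - φ² / 2` satisfies `φ x (ψ z - ψ x) ≤ H z - H x`: this is the
co-coercivity inequality `(φ z - φ x)² / (2L) ≤ ∫ₓᶻ φ - φ x (z - x)` of the convex,
`L`-smooth primitive of `φ`. Taking `x` or `z` equal to `0` gives `0 ≤ H ≤ φ ψ`. Hence, as
`ρ^(-2(k-j)) ≤ ρ^(-2k)`, the `k`-th term of the sum dominates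
`ρ^(-2k) H (y k) - ρ^(-2(k-j)) H (y (k-j))`, and these differences telescope in steps of `j` to a
sum of nonnegative terms.
-/

open intervalIntegral Set

def SlopeRestricted (α β : ℝ) (f : ℝ → ℝ) : Prop :=
  ∀ x y : ℝ, α * (x - y) ^ 2 ≤ (f x - f y) * (x - y) ∧ (f x - f y) * (x - y) ≤ β * (x - y) ^ 2

namespace SlopeRestricted

variable {α β : ℝ} {f : ℝ → ℝ}

theorem le (hf : SlopeRestricted α β f) : α ≤ β := by
  simpa using (hf 1 0).1.trans (hf 1 0).2

theorem sub_linear (hf : SlopeRestricted α β f) (γ : ℝ) :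
    SlopeRestricted (α - γ) (β - γ) (fun x => f x - γ * x) := by
  intro x y
  constructor <;> linarith [hf x y]

theorem comp_neg_neg (hf : SlopeRestricted α β f) :
    SlopeRestricted α β (fun x => -f (-x)) := by
  intro x y
  have h := hf (-y) (-x)
  constructor <;> linarith

theorem monotone (hf : SlopeRestricted α β f) (hα : 0 ≤ α) : Monotone f := by
  intro x y hxy
  rcases hxy.eq_or_lt with rfl | hlt
  · rfl
  · have : 0 ≤ (f y - f x) * (y - x) := (mul_nonneg hα (sq_nonneg _)).trans (hf y x).1
    nlinarith [(nonneg_of_mul_nonneg_left this (sub_pos.2 hlt))]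

theorem sub_le_mul_sub (hf : SlopeRestricted α β f) {x y : ℝ} (hxy : x ≤ y) :
    f y - f x ≤ β * (y - x) := by
  rcases hxy.eq_or_lt with rfl | hlt
  · simp
  · have h := (hf y x).2
    rw [sq, ← mul_assoc] at h
    exact le_of_mul_le_mul_right h (sub_pos.2 hlt)

end SlopeRestricted

theorem sq_div_two_le_mul_integral_of_ramp_le {g : ℝ → ℝ} {a b L δ : ℝ} (hab : a ≤ b)
    (hL : 0 ≤ L) (hg : IntervalIntegrable g MeasureTheory.volume a b) (hg0 : ∀ t ∈ Icc a b, 0 ≤ g t)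
    (hgδ : ∀ t ∈ Icc a b, δ - L * (b - t) ≤ g t) (hδ : 0 ≤ δ) (hδL : δ ≤ L * (b - a)) :
    δ ^ 2 / 2 ≤ L * ∫ t in a..b, g t := by
  rcases hL.eq_or_lt with rfl | hL
  · simp [le_antisymm (by simpa using hδL) hδ]
  set m := b - δ / L
  have hδL' : δ / L ≤ b - a := (div_le_iff₀ hL).2 (by linarith)
  have ham : a ≤ m := by linarith
  have hmb : m ≤ b := by linarith [div_nonneg hδ hL.le]
  have hm : m ∈ uIcc a b := by rw [uIcc_of_le hab]; exact ⟨ham, hmb⟩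
  have hgr : IntervalIntegrable g MeasureTheory.volume m b :=
    hg.mono_set (uIcc_subset_uIcc_right hm)
  have hsplit : (∫ t in a..m, g t) + ∫ t in m..b, g t = ∫ t in a..b, g t :=
    integral_add_adjacent_intervals (hg.mono_set (uIcc_subset_uIcc_left hm)) hgr
  have hleft : 0 ≤ ∫ t in a..m, g t :=
    integral_nonneg ham fun t ht => hg0 t ⟨ht.1, ht.2.trans hmb⟩
  have hright : ∫ t in m..b, (δ - L * (b - t)) ≤ ∫ t in m..b, g t :=
    integral_mono_on hmb (Continuous.intervalIntegrable (by fun_prop) _ _) hgr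
      fun t ht => hgδ t ⟨ham.trans ht.1, ht.2⟩
  have hval : ∫ t in m..b, (δ - L * (b - t)) = δ ^ 2 / (2 * L) := by
    rw [integral_comp_sub_left (fun s => δ - L * s), integral_sub intervalIntegrable_const
      (Continuous.intervalIntegrable (by fun_prop) _ _), integral_const, integral_const_mul,
      integral_id]
    simp only [m, smul_eq_mul]
    field_simp
    ring
  calc δ ^ 2 / 2 = L * (δ ^ 2 / (2 * L)) := by field_simp
    _ ≤ L * ∫ t in a..b, g t := by gcongr; linarith

namespace SlopeRestricted

variable {L : ℝ} {f : ℝ → ℝ}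

theorem sq_div_two_le_mul_integral_of_le (hf : SlopeRestricted 0 L f) {x z : ℝ} (hxz : x ≤ z) :
    (f z - f x) ^ 2 / 2 ≤ L * ((∫ t in x..z, f t) - f x * (z - x)) := by
  have hmono := hf.monotone le_rfl
  have hsub : (∫ t in x..z, f t) - f x * (z - x) = ∫ t in x..z, (f t - f x) := by
    rw [integral_sub hmono.intervalIntegrable intervalIntegrable_const, integral_const,
      smul_eq_mul, mul_comm]
  rw [hsub]
  refine sq_div_two_le_mul_integral_of_ramp_le hxz hf.le
    (hmono.intervalIntegrable.sub intervalIntegrable_const) (fun t ht => sub_nonneg.2 (hmono ht.1))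
    (fun t ht => ?_) (sub_nonneg.2 (hmono hxz)) (hf.sub_le_mul_sub hxz)
  linarith [hf.sub_le_mul_sub ht.2]

theorem sq_div_two_le_mul_integral (hf : SlopeRestricted 0 L f) (x z : ℝ) :
    (f z - f x) ^ 2 / 2 ≤ L * ((∫ t in x..z, f t) - f x * (z - x)) := by
  rcases le_total x z with hxz | hzx
  · exact hf.sq_div_two_le_mul_integral_of_le hxz
  · have h := hf.comp_neg_neg.sq_div_two_le_mul_integral_of_le (neg_le_neg hzx)
    have hint : ∫ t in -x..-z, -f (-t) = ∫ t in x..z, f t := by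
      rw [intervalIntegral.integral_neg, integral_comp_neg, neg_neg, neg_neg, integral_symm,
        neg_neg]
    simp only [hint, neg_neg] at h
    convert h using 2 <;> ring

end SlopeRestricted

noncomputable def zamesFalbPotential (L : ℝ) (f : ℝ → ℝ) (x : ℝ) : ℝ :=
  L * (∫ t in (0 : ℝ)..x, f t) - f x ^ 2 / 2

namespace SlopeRestricted

variable {L : ℝ} {f : ℝ → ℝ}

theorem mul_sub_le_zamesFalbPotential_sub (hf : SlopeRestricted 0 L f) (x z : ℝ) :
    f x * ((L * z - f z) - (L * x - f x)) ≤
      zamesFalbPotential L f z - zamesFalbPotential L f x := by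
  have hmono := hf.monotone le_rfl
  have hint : (∫ t in (0 : ℝ)..z, f t) - ∫ t in (0 : ℝ)..x, f t = ∫ t in x..z, f t :=
    integral_interval_sub_left hmono.intervalIntegrable hmono.intervalIntegrable
  have key := hf.sq_div_two_le_mul_integral x z
  rw [← hint] at key
  unfold zamesFalbPotential
  linarith

variable (hf : SlopeRestricted 0 L f) (hf0 : f 0 = 0)
include hf hf0

theorem zamesFalbPotential_nonneg (x : ℝ) : 0 ≤ zamesFalbPotential L f x := by
  simpa [hf0, zamesFalbPotential] using hf.mul_sub_le_zamesFalbPotential_sub 0 x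

theorem zamesFalbPotential_le (x : ℝ) : zamesFalbPotential L f x ≤ f x * (L * x - f x) := by
  have h := hf.mul_sub_le_zamesFalbPotential_sub x 0
  simp only [hf0, mul_zero, sub_zero, zamesFalbPotential, intervalIntegral.integral_same] at h ⊢
  linarith

theorem weighted_zamesFalbPotential_sub_le {c c' : ℝ} (hc' : 0 ≤ c') (hc : c' ≤ c) (x z : ℝ) :
    c * zamesFalbPotential L f x - c' * zamesFalbPotential L f z ≤
      c * (f x * (L * x - f x)) - c' * (f x * (L * z - f z)) := by
  have hcross := mul_le_mul_of_nonneg_left (hf.mul_sub_le_zamesFalbPotential_sub x z) hc'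
  have hdiag := mul_le_mul_of_nonneg_left (hf.zamesFalbPotential_le hf0 x) (sub_nonneg.2 hc)
  linarith

end SlopeRestricted

theorem sum_range_nonneg_of_sub_shift_le {a e : ℕ → ℝ} (he : ∀ k, 0 ≤ e k) (j N : ℕ)
    (ha : ∀ k, e k - (if j ≤ k then e (k - j) else 0) ≤ a k) :
    0 ≤ ∑ k ∈ Finset.range N, a k := by
  have hshift : ∑ k ∈ Finset.range N, (if j ≤ k then e (k - j) else 0)
      = ∑ i ∈ Finset.range (N - j), e i := by
    have hfilter : (Finset.range N).filter (j ≤ ·) = Finset.Ico j N := by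
      ext k
      simp only [Finset.mem_filter, Finset.mem_range, Finset.mem_Ico]
      omega
    rw [← Finset.sum_filter, hfilter, Finset.sum_Ico_eq_sum_range]
    simp only [Nat.add_sub_cancel_left]
  calc 0 ≤ ∑ k ∈ Finset.range N, e k -
        ∑ k ∈ Finset.range N, (if j ≤ k then e (k - j) else 0) := by
        rw [hshift, sub_nonneg]
        exact Finset.sum_le_sum_of_subset_of_nonneg (Finset.range_subset_range.2 (Nat.sub_le N j))
          fun i _ _ => he i
    _ ≤ ∑ k ∈ Finset.range N, a k := by
        rw [← Finset.sum_sub_distrib]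
        exact Finset.sum_le_sum fun k _ => ha k

theorem off_by_j_zames_falb_rho_iqc_scalar_general
    (α β : ℝ)
    (Δ : ℝ → ℝ) (hΔ_zero : Δ 0 = 0)
    (hslope : ∀ x y : ℝ,
      α * (x - y) ^ 2 ≤ (Δ x - Δ y) * (x - y) ∧ (Δ x - Δ y) * (x - y) ≤ β * (x - y) ^ 2)
    (ρ : ℝ) (hρ : ρ ∈ Set.Ioc (0 : ℝ) 1)
    (j : ℕ)
    (y : ℕ → ℝ) (ytil : ℤ → ℝ)
    (hytil_nat : ∀ k : ℕ, ytil (k : ℤ) = β * y k - Δ (y k))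
    (hytil_neg : ∀ k : ℤ, k < 0 → ytil k = 0)
    (T : ℕ) :
    0 ≤ ∑ k ∈ Finset.range (T + 1),
        ρ ^ (-(2 * (k : ℤ))) *
          ((Δ (y k) - α * y k) * (ytil (k : ℤ) - ρ ^ (2 * j) * ytil ((k : ℤ) - (j : ℤ)))) := by
  obtain ⟨hρ0, hρ1⟩ := hρ
  set L := β - α
  set φ : ℝ → ℝ := fun t => Δ t - α * t
  have hφ : SlopeRestricted 0 L φ := by simpa using SlopeRestricted.sub_linear hslope α
  have hφ0 : φ 0 = 0 := by simp [φ, hΔ_zero]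
  have hytil (k : ℕ) : ytil k = L * y k - φ (y k) := by rw [hytil_nat]; ring
  set w : ℕ → ℝ := fun k => ρ ^ (-(2 * (k : ℤ)))
  have hw_pos (k : ℕ) : 0 < w k := zpow_pos hρ0 _
  have hw_shift {k : ℕ} (hjk : j ≤ k) : w k * ρ ^ (2 * j) = w (k - j) := by
    rw [← zpow_natCast, ← zpow_add₀ hρ0.ne']
    congr 1
    push_cast [hjk]
    ring
  have hw_mono {k : ℕ} (hjk : j ≤ k) : w (k - j) ≤ w k :=
    zpow_le_zpow_right_of_le_one₀ hρ0 hρ1 (by omega)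
  refine sum_range_nonneg_of_sub_shift_le (e := fun k => w k * zamesFalbPotential L φ (y k))
    (fun k => mul_nonneg (hw_pos k).le (hφ.zamesFalbPotential_nonneg hφ0 (y k))) j (T + 1)
    fun k => ?_
  by_cases hjk : j ≤ k
  · have hcast : (k : ℤ) - j = ((k - j : ℕ) : ℤ) := by omega
    rw [if_pos hjk, hcast, hytil, hytil, ← hw_shift hjk]
    have hterm := hφ.weighted_zamesFalbPotential_sub_le hφ0 (hw_pos (k - j)).le (hw_mono hjk)
      (y k) (y (k - j))
    rw [← hw_shift hjk] at hterm
    linarith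
  · rw [if_neg hjk, hytil_neg ((k : ℤ) - j) (by omega), hytil]
    have hterm := hφ.weighted_zamesFalbPotential_sub_le hφ0 le_rfl (hw_pos k).le (y k) 0
    simpa only [zero_mul, mul_zero, sub_zero] using hterm

/-- Scalar time-domain form of the off-by-`j` Zames–Falb ρ-IQC for a static
nonlinearity `Δ : ℝ → ℝ` that is slope-restricted on `[α,β]`.  Here `ỹ` (`ytil`)
is the zero-extension to `ℤ` of `k ↦ β y_k − Δ(y_k)` and `ũ_k = Δ(y_k) − α y_k`. -/
theorem off_by_j_zames_falb_rho_iqc_scalar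
    (α β : ℝ) (hα : 0 ≤ α) (hαβ : α ≤ β)
    (Δ : ℝ → ℝ) (hΔ_zero : Δ 0 = 0)
    (hslope : ∀ x y : ℝ,
      α * (x - y) ^ 2 ≤ (Δ x - Δ y) * (x - y) ∧ (Δ x - Δ y) * (x - y) ≤ β * (x - y) ^ 2)
    (ρ : ℝ) (hρ : ρ ∈ Set.Ioc (0 : ℝ) 1)
    (j : ℕ) (hj : 1 ≤ j)
    (y : ℕ → ℝ) (ytil : ℤ → ℝ)
    (hytil_nat : ∀ k : ℕ, ytil (k : ℤ) = β * y k - Δ (y k))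
    (hytil_neg : ∀ k : ℤ, k < 0 → ytil k = 0)
    (T : ℕ) :
    0 ≤ ∑ k ∈ Finset.range (T + 1),
        ρ ^ (-(2 * (k : ℤ))) *
          ((Δ (y k) - α * y k) * (ytil (k : ℤ) - ρ ^ (2 * j) * ytil ((k : ℤ) - (j : ℤ)))) :=
  off_by_j_zames_falb_rho_iqc_scalar_general α β Δ hΔ_zero hslope ρ hρ j y ytil hytil_nat hytil_neg
    T
end

section
/- Let 0 ≤ α ≤ β be reals and let Δ : ℝ → ℝ satisfy Δ(0) = 0 and be slope-restricted on [α,β], i.e. α(x−y)² ≤ (Δ(x)−Δ(y))(x−y) ≤ β(x−y)² for all x, y ∈ ℝ. Fix ρ ∈ (0,1] and a sequence y : ℕ → ℝ. Let h : ℕ → ℝ satisfy h_k ≥ 0 for all k, with the sequence (ρ^{-2k} h_k) summable and ∑_{k=0}^{∞} ρ^{-2k} h_k ≤ 1. Define ũ_k = Δ(y_k) − α y_k and ỹ_k = β y_k − Δ(y_k) for k ≥ 0. Then for every T ∈ ℕ, ∑_{k=0}^{T} ρ^{-2k} ũ_k (ỹ_k − ∑_{i=0}^{k} h_i ỹ_{k−i})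 ≥ 0. -/
namespace ZamesFalbAux

/-- Lower Stieltjes-type sum of `φ dψ` along a chain `t 0, …, t n`. -/
noncomputable def lowerSum (φ ψ : ℝ → ℝ) (n : ℕ) (t : ℕ → ℝ) : ℝ :=
  ∑ i ∈ Finset.range n, φ (t i) * (ψ (t (i + 1)) - ψ (t i))

/-- The set of all lower sums along monotone chains from `b` to `a`. -/
def chainSums (φ ψ : ℝ → ℝ) (b a : ℝ) : Set ℝ :=
  {x | ∃ n : ℕ, ∃ t : ℕ → ℝ, t 0 = b ∧ t n = a ∧ (∀ i, i < n → t i ≤ t (i + 1)) ∧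
    x = lowerSum φ ψ n t}

/-- Lower Stieltjes integral `∫_b^a φ dψ` (as a sup of lower sums). -/
noncomputable def lowInt (φ ψ : ℝ → ℝ) (b a : ℝ) : ℝ := sSup (chainSums φ ψ b a)

variable {φ ψ : ℝ → ℝ} {b c a : ℝ}

lemma chain_mono {n : ℕ} {t : ℕ → ℝ} (ht : ∀ i, i < n → t i ≤ t (i + 1)) :
    ∀ j, j ≤ n → ∀ i, i ≤ j → t i ≤ t j := by
  intro j
  induction j with
  | zero => intro _ i hi; interval_cases i; exact le_rfl
  | succ m ih =>
      intro hm i hi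
      rcases Nat.eq_or_lt_of_le hi with rfl | hlt
      · exact le_rfl
      · exact le_trans (ih (le_of_lt (Nat.lt_of_succ_le hm)) i (Nat.lt_succ_iff.mp hlt))
          (ht m (Nat.lt_of_succ_le hm))

lemma chain_bounds {n : ℕ} {t : ℕ → ℝ} (h0 : t 0 = b) (hn : t n = a)
    (ht : ∀ i, i < n → t i ≤ t (i + 1)) : ∀ i, i ≤ n → b ≤ t i ∧ t i ≤ a := by
  intro i hi
  constructor
  · rw [← h0]; exact chain_mono ht i hi 0 (Nat.zero_le i)
  · rw [← hn]; exact chain_mono ht n le_rfl i hi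

lemma mem_chainSums_single (hba : b ≤ a) :
    φ b * (ψ a - ψ b) ∈ chainSums φ ψ b a := by
  refine ⟨1, fun i => if i = 0 then b else a, by simp, by simp, ?_, ?_⟩
  · intro i hi; interval_cases i; simpa using hba
  · simp [lowerSum]

lemma chainSums_le (hφ : Monotone φ) (hψ : Monotone ψ) {x : ℝ}
    (hx : x ∈ chainSums φ ψ b a) : x ≤ φ a * (ψ a - ψ b) := by
  obtain ⟨n, t, h0, hn, ht, rfl⟩ := hx
  have hb : ∀ i, i ≤ n → b ≤ t i ∧ t i ≤ a := chain_bounds h0 hn ht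
  calc lowerSum φ ψ n t ≤ ∑ i ∈ Finset.range n, φ a * (ψ (t (i + 1)) - ψ (t i)) := by
        apply Finset.sum_le_sum
        intro i hi
        rw [Finset.mem_range] at hi
        have h1 : φ (t i) ≤ φ a := hφ (hb i hi.le).2
        have h2 : ψ (t i) ≤ ψ (t (i + 1)) := hψ (ht i hi)
        nlinarith
    _ = φ a * (ψ (t n) - ψ (t 0)) := by
        rw [← Finset.mul_sum, Finset.sum_range_sub (fun i => ψ (t i))]
    _ = φ a * (ψ a - ψ b) := by rw [h0, hn]

lemma chainSums_nonempty (hba : b ≤ a) : (chainSums φ ψ b a).Nonempty :=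
  ⟨_, mem_chainSums_single hba⟩

lemma chainSums_bddAbove (hφ : Monotone φ) (hψ : Monotone ψ) :
    BddAbove (chainSums φ ψ b a) :=
  ⟨φ a * (ψ a - ψ b), fun _ hx => chainSums_le hφ hψ hx⟩

lemma le_lowInt (hφ : Monotone φ) (hψ : Monotone ψ) (hba : b ≤ a) :
    φ b * (ψ a - ψ b) ≤ lowInt φ ψ b a :=
  le_csSup (chainSums_bddAbove hφ hψ) (mem_chainSums_single hba)

lemma lowInt_le (hφ : Monotone φ) (hψ : Monotone ψ) (hba : b ≤ a) :
    lowInt φ ψ b a ≤ φ a * (ψ a - ψ b) :=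
  csSup_le (chainSums_nonempty hba) (fun _ hx => chainSums_le hφ hψ hx)

lemma concat_mem {x z : ℝ} (hx : x ∈ chainSums φ ψ b c) (hz : z ∈ chainSums φ ψ c a) :
    x + z ∈ chainSums φ ψ b a := by
  obtain ⟨n₁, t₁, h10, h1n, ht1, rfl⟩ := hx
  obtain ⟨n₂, t₂, h20, h2n, ht2, rfl⟩ := hz
  have hc : t₁ n₁ = t₂ 0 := by rw [h1n, h20]
  refine ⟨n₁ + n₂, fun i => if i ≤ n₁ then t₁ i else t₂ (i - n₁), by simp [h10], ?_, ?_, ?_⟩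
  · rcases Nat.eq_zero_or_pos n₂ with rfl | hn2
    · simpa using (hc.trans h2n)
    · have : ¬ (n₁ + n₂ ≤ n₁) := by omega
      simp only [this, if_false]
      rw [show n₁ + n₂ - n₁ = n₂ by omega, h2n]
  · intro i hi
    rcases lt_trichotomy i n₁ with h | rfl | h
    · have e1 : i ≤ n₁ := h.le
      have e2 : i + 1 ≤ n₁ := h
      simp only [e1, e2, if_true]
      exact ht1 i h
    · have hn2 : 0 < n₂ := by omega
      have e2 : ¬ (i + 1 ≤ i) := by omega
      have e3 : i + 1 - i = 1 := by omega
      simp only [le_rfl, if_true, e2, if_false, e3]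
      rw [hc]
      exact ht2 0 hn2
    · have e1 : ¬ (i ≤ n₁) := by omega
      have e2 : ¬ (i + 1 ≤ n₁) := by omega
      have e3 : i + 1 - n₁ = (i - n₁) + 1 := by omega
      simp only [e1, e2, if_false, e3]
      exact ht2 (i - n₁) (by omega)
  · unfold lowerSum
    rw [Finset.sum_range_add]
    congr 1
    · apply Finset.sum_congr rfl
      intro i hi
      rw [Finset.mem_range] at hi
      have h1 : i ≤ n₁ := hi.le
      have h2 : i + 1 ≤ n₁ := hi
      simp [h1, h2]
    · apply Finset.sum_congr rfl
      intro i hi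
      rw [Finset.mem_range] at hi
      have h2 : ¬ (n₁ + i + 1 ≤ n₁) := by omega
      rcases Nat.eq_zero_or_pos i with rfl | hip
      · simp [h2, hc.symm]
      · have h1 : ¬ (n₁ + i ≤ n₁) := by omega
        have e1 : n₁ + i - n₁ = i := by omega
        have e2 : n₁ + i + 1 - n₁ = i + 1 := by omega
        simp only [h1, h2, if_false, e1, e2]

lemma split_le (hφ : Monotone φ) (hψ : Monotone ψ) (hbc : b ≤ c) (hca : c ≤ a)
    {x : ℝ} (hx : x ∈ chainSums φ ψ b a) :
    ∃ x₁ ∈ chainSums φ ψ b c, ∃ x₂ ∈ chainSums φ ψ c a, x ≤ x₁ + x₂ := by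
  obtain ⟨n, t, h0, hn, ht, rfl⟩ := hx
  refine ⟨lowerSum φ ψ n (fun i => min (t i) c),
    ⟨n, _, by simp [h0, hbc], by simp [hn, hca], fun i hi => min_le_min (ht i hi) le_rfl, rfl⟩,
    lowerSum φ ψ n (fun i => max (t i) c),
    ⟨n, _, by simp [h0, hbc], by simp [hn, hca], fun i hi => max_le_max (ht i hi) le_rfl, rfl⟩, ?_⟩
  unfold lowerSum
  rw [← Finset.sum_add_distrib]
  apply Finset.sum_le_sum
  intro i hi
  rw [Finset.mem_range] at hi
  have hstep := ht i hi
  dsimp only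
  rcases le_total c (t i) with h1 | h1
  · have h2 : c ≤ t (i + 1) := le_trans h1 hstep
    rw [min_eq_right h1, min_eq_right h2, max_eq_left h1, max_eq_left h2]
    simp
  · rcases le_total (t (i + 1)) c with h2 | h2
    · rw [min_eq_left h2, min_eq_left (le_trans hstep h2), max_eq_right h2,
        max_eq_right (le_trans hstep h2)]
      simp
    · rw [min_eq_left h1, min_eq_right h2, max_eq_right h1, max_eq_left h2]
      have m1 : φ (t i) ≤ φ c := hφ h1
      have m2 : ψ c ≤ ψ (t (i + 1)) := hψ h2
      nlinarith

lemma lowInt_add (hφ : Monotone φ) (hψ : Monotone ψ) (hbc : b ≤ c) (hca : c ≤ a) :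
    lowInt φ ψ b a = lowInt φ ψ b c + lowInt φ ψ c a := by
  apply le_antisymm
  · apply csSup_le (chainSums_nonempty (hbc.trans hca))
    intro x hx
    obtain ⟨x₁, h₁, x₂, h₂, hle⟩ := split_le hφ hψ hbc hca hx
    exact hle.trans (add_le_add (le_csSup (chainSums_bddAbove hφ hψ) h₁)
      (le_csSup (chainSums_bddAbove hφ hψ) h₂))
  · have key : ∀ x ∈ chainSums φ ψ b c, ∀ z ∈ chainSums φ ψ c a,
        x + z ≤ lowInt φ ψ b a :=
      fun x hx z hz => le_csSup (chainSums_bddAbove hφ hψ) (concat_mem hx hz)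
    have h1 : lowInt φ ψ b c ≤ lowInt φ ψ b a - lowInt φ ψ c a := by
      apply csSup_le (chainSums_nonempty hbc)
      intro x hx
      have h2 : lowInt φ ψ c a ≤ lowInt φ ψ b a - x := by
        apply csSup_le (chainSums_nonempty hca)
        intro z hz
        linarith [key x hx z hz]
      linarith
    linarith

/-- Potential function: `pot a = ∫_0^a φ dψ` (lower Stieltjes). -/
noncomputable def pot (φ ψ : ℝ → ℝ) (a : ℝ) : ℝ :=
  if 0 ≤ a then lowInt φ ψ 0 a else -lowInt φ ψ a 0

lemma pot_zero (hφ : Monotone φ) (hψ : Monotone ψ) : pot φ ψ 0 = 0 := by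
  have h1 := lowInt_le (b := (0:ℝ)) (a := (0:ℝ)) hφ hψ le_rfl
  have h2 := le_lowInt (b := (0:ℝ)) (a := (0:ℝ)) hφ hψ le_rfl
  simp only [pot, if_pos le_rfl]
  nlinarith

lemma pot_sub (hφ : Monotone φ) (hψ : Monotone ψ) (hba : b ≤ a) :
    pot φ ψ a - pot φ ψ b = lowInt φ ψ b a := by
  unfold pot
  rcases le_or_gt 0 b with hb | hb
  · have ha : 0 ≤ a := hb.trans hba
    rw [if_pos ha, if_pos hb]
    have := lowInt_add hφ hψ hb hba
    linarith
  · rcases le_or_gt 0 a with ha | ha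
    · rw [if_pos ha, if_neg (not_le.mpr hb)]
      have := lowInt_add hφ hψ hb.le ha
      linarith
    · rw [if_neg (not_le.mpr ha), if_neg (not_le.mpr hb)]
      have := lowInt_add hφ hψ hba ha.le
      linarith

/-- The subgradient-type inequality for the potential, valid for ALL `a b`. -/
lemma pot_pair (hφ : Monotone φ) (hψ : Monotone ψ) (a b : ℝ) :
    pot φ ψ a - pot φ ψ b ≤ φ a * (ψ a - ψ b) := by
  rcases le_total b a with hba | hab
  · rw [pot_sub hφ hψ hba]
    exact lowInt_le hφ hψ hba
  · have h1 := pot_sub hφ hψ hab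
    have h2 := le_lowInt hφ hψ hab
    nlinarith

lemma pot_nonneg (hφ : Monotone φ) (hψ : Monotone ψ) (hφ0 : φ 0 = 0) (a : ℝ) :
    0 ≤ pot φ ψ a := by
  have := pot_pair hφ hψ 0 a
  rw [pot_zero hφ hψ, hφ0] at this
  linarith

lemma pot_le_mul (hφ : Monotone φ) (hψ : Monotone ψ) (hψ0 : ψ 0 = 0) (a : ℝ) :
    pot φ ψ a ≤ φ a * ψ a := by
  have := pot_pair hφ hψ a 0
  rw [pot_zero hφ hψ, hψ0] at this
  linarith

/-- Triangle sum reindexing: `∑_{k<n} ∑_{i≤k} f k i = ∑_{j<n} ∑_{i<n-j} f (j+i) i`. -/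
lemma tri_sum (n : ℕ) (f : ℕ → ℕ → ℝ) :
    ∑ k ∈ Finset.range n, ∑ i ∈ Finset.range (k + 1), f k i
      = ∑ j ∈ Finset.range n, ∑ i ∈ Finset.range (n - j), f (j + i) i := by
  induction n with
  | zero => simp
  | succ n ih =>
      rw [Finset.sum_range_succ, ih, Finset.sum_range_succ (f := fun j =>
        ∑ i ∈ Finset.range (n + 1 - j), f (j + i) i)]
      have h1 : ∀ j ∈ Finset.range n,
          ∑ i ∈ Finset.range (n + 1 - j), f (j + i) i
            = ∑ i ∈ Finset.range (n - j), f (j + i) i + f n (n - j) := by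
        intro j hj
        rw [Finset.mem_range] at hj
        rw [show n + 1 - j = (n - j) + 1 by omega, Finset.sum_range_succ,
          show j + (n - j) = n by omega]
      rw [Finset.sum_congr rfl h1, Finset.sum_add_distrib]
      have h2 : ∑ j ∈ Finset.range n, f n (n - j) = ∑ i ∈ Finset.range n, f n (i + 1) := by
        rw [← Finset.sum_range_reflect (fun i => f n (i + 1)) n]
        apply Finset.sum_congr rfl
        intro j hj
        rw [Finset.mem_range] at hj
        rw [show n - 1 - j + 1 = n - j by omega]
      have h3 : ∑ i ∈ Finset.range (n + 1 - n), f (n + i) i = f n 0 := by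
        rw [show n + 1 - n = 1 by omega]
        simp
      rw [h2, h3, Finset.sum_range_succ' (fun i => f n i) n]
      ring

end ZamesFalbAux

open ZamesFalbAux

/-- Scalar time-domain form of the general Zames–Falb ρ-IQC theorem: a Zames–Falb
multiplier with nonnegative impulse response `h` satisfying the ρ-weighted ℓ1
constraint `∑_k ρ^{-2k} h_k ≤ 1` yields a valid ρ-IQC for any static nonlinearity
`Δ : ℝ → ℝ` slope-restricted on `[α,β]`.  Here `ũ_k = Δ(y_k) − α y_k` and
`ỹ_k = β y_k − Δ(y_k)`. -/
theorem general_zames_falb_rho_iqc_scalar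
    (α β : ℝ) (hα : 0 ≤ α) (hαβ : α ≤ β)
    (Δ : ℝ → ℝ) (hΔ_zero : Δ 0 = 0)
    (hslope : ∀ x y : ℝ,
      α * (x - y) ^ 2 ≤ (Δ x - Δ y) * (x - y) ∧ (Δ x - Δ y) * (x - y) ≤ β * (x - y) ^ 2)
    (ρ : ℝ) (hρ : ρ ∈ Set.Ioc (0 : ℝ) 1)
    (y : ℕ → ℝ)
    (h : ℕ → ℝ) (hh_nonneg : ∀ k : ℕ, 0 ≤ h k)
    (hh_summable : Summable (fun k : ℕ => ρ ^ (-(2 * (k : ℤ))) * h k))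
    (hh_l1 : (∑' k : ℕ, ρ ^ (-(2 * (k : ℤ))) * h k) ≤ 1)
    (T : ℕ) :
    0 ≤ ∑ k ∈ Finset.range (T + 1),
        ρ ^ (-(2 * (k : ℤ))) *
          ((Δ (y k) - α * y k) *
            ((β * y k - Δ (y k)) -
              ∑ i ∈ Finset.range (k + 1), h i * (β * y (k - i) - Δ (y (k - i))))) := by
  obtain ⟨hρ0, hρ1⟩ := hρ
  set φ : ℝ → ℝ := fun x => Δ x - α * x with hφdef
  set ψ : ℝ → ℝ := fun x => β * x - Δ x with hψdef
  have hφ : Monotone φ := by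
    intro p q hpq
    rcases eq_or_lt_of_le hpq with rfl | hlt
    · exact le_rfl
    · have h1 := (hslope q p).1
      simp only [hφdef]
      nlinarith [sq_nonneg (q - p)]
  have hψ : Monotone ψ := by
    intro p q hpq
    rcases eq_or_lt_of_le hpq with rfl | hlt
    · exact le_rfl
    · have h1 := (hslope q p).2
      simp only [hψdef]
      nlinarith [sq_nonneg (q - p)]
  have hφ0 : φ 0 = 0 := by simp [hφdef, hΔ_zero]
  have hψ0 : ψ 0 = 0 := by simp [hψdef, hΔ_zero]
  set c : ℕ → ℝ := fun k => ρ ^ (-(2 * (k : ℤ))) with hcdef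
  have hc_pos : ∀ k, 0 < c k := fun k => zpow_pos hρ0 _
  have hc_one : ∀ k, 1 ≤ c k := by
    intro k
    have h1 : ρ ^ (2 * (k : ℤ)) ≤ 1 := by
      rw [show (2 * (k : ℤ)) = ((2 * k : ℕ) : ℤ) by push_cast; ring, zpow_natCast]
      exact pow_le_one₀ hρ0.le hρ1
    have h2 : 0 < ρ ^ (2 * (k : ℤ)) := zpow_pos hρ0 _
    rw [hcdef]
    simp only [zpow_neg]
    exact (one_le_inv₀ h2).mpr h1
  have hc_add : ∀ j i : ℕ, c (j + i) = c j * c i := by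
    intro j i
    rw [hcdef]
    simp only
    rw [← zpow_add₀ (ne_of_gt hρ0)]
    congr 1
    push_cast
    ring
  set Z : ℕ → ℝ := fun k => pot φ ψ (y k) with hZdef
  set G : ℕ → ℝ := fun k => φ (y k) * ψ (y k) with hGdef
  have hZ0 : ∀ k, 0 ≤ Z k := fun k => pot_nonneg hφ hψ hφ0 (y k)
  have hZG : ∀ k, Z k ≤ G k := fun k => pot_le_mul hφ hψ hψ0 (y k)
  have key : ∀ k j : ℕ, φ (y k) * ψ (y j) ≤ G k - Z k + Z j := by
    intro k j
    have := pot_pair hφ hψ (y k) (y j)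
    simp only [hGdef, hZdef]
    nlinarith
  have hP : ∀ m : ℕ, ∑ i ∈ Finset.range m, c i * h i ≤ 1 := by
    intro m
    refine le_trans (Summable.sum_le_tsum _ (fun i _ => mul_nonneg (hc_pos i).le (hh_nonneg i))
      hh_summable) hh_l1
  -- rewrite goal as A - B
  have goal_eq : ∑ k ∈ Finset.range (T + 1),
        c k * (φ (y k) * (ψ (y k) - ∑ i ∈ Finset.range (k + 1), h i * ψ (y (k - i))))
      = (∑ k ∈ Finset.range (T + 1), c k * G k)
        - ∑ k ∈ Finset.range (T + 1), ∑ i ∈ Finset.range (k + 1),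
            (c k * h i) * (φ (y k) * ψ (y (k - i))) := by
    rw [← Finset.sum_sub_distrib]
    apply Finset.sum_congr rfl
    intro k _
    rw [mul_sub, mul_sub, Finset.mul_sum, Finset.mul_sum]
    congr 1
    apply Finset.sum_congr rfl
    intro i _
    ring
  have step1 : ∑ k ∈ Finset.range (T + 1), ∑ i ∈ Finset.range (k + 1),
        (c k * h i) * (φ (y k) * ψ (y (k - i)))
      ≤ ∑ k ∈ Finset.range (T + 1), ∑ i ∈ Finset.range (k + 1),
        (c k * h i) * (c i * (G k - Z k) + Z (k - i)) := by
    apply Finset.sum_le_sum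
    intro k _
    apply Finset.sum_le_sum
    intro i _
    apply mul_le_mul_of_nonneg_left _ (mul_nonneg (hc_pos k).le (hh_nonneg i))
    have h1 := key k (k - i)
    have h2 := hc_one i
    have h3 := hZG k
    nlinarith
  have step2 : ∑ k ∈ Finset.range (T + 1), ∑ i ∈ Finset.range (k + 1),
        (c k * h i) * (c i * (G k - Z k) + Z (k - i))
      = (∑ k ∈ Finset.range (T + 1),
          (c k * (G k - Z k)) * ∑ i ∈ Finset.range (k + 1), c i * h i)
        + ∑ k ∈ Finset.range (T + 1), ∑ i ∈ Finset.range (k + 1),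
            (c k * h i) * Z (k - i) := by
    rw [← Finset.sum_add_distrib]
    apply Finset.sum_congr rfl
    intro k _
    rw [Finset.mul_sum, ← Finset.sum_add_distrib]
    apply Finset.sum_congr rfl
    intro i _
    ring
  have step3 : ∑ k ∈ Finset.range (T + 1),
        (c k * (G k - Z k)) * ∑ i ∈ Finset.range (k + 1), c i * h i
      ≤ ∑ k ∈ Finset.range (T + 1), c k * (G k - Z k) := by
    apply Finset.sum_le_sum
    intro k _
    have hx : 0 ≤ c k * (G k - Z k) :=
      mul_nonneg (hc_pos k).le (by linarith [hZG k])
    calc (c k * (G k - Z k)) * ∑ i ∈ Finset.range (k + 1), c i * h i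
        ≤ (c k * (G k - Z k)) * 1 := mul_le_mul_of_nonneg_left (hP (k + 1)) hx
      _ = c k * (G k - Z k) := mul_one _
  have step4 : ∑ k ∈ Finset.range (T + 1), ∑ i ∈ Finset.range (k + 1),
        (c k * h i) * Z (k - i)
      ≤ ∑ j ∈ Finset.range (T + 1), c j * Z j := by
    rw [tri_sum (T + 1) (fun k i => (c k * h i) * Z (k - i))]
    have he : ∀ j ∈ Finset.range (T + 1),
        ∑ i ∈ Finset.range (T + 1 - j), (c (j + i) * h i) * Z (j + i - i)
          = (c j * Z j) * ∑ i ∈ Finset.range (T + 1 - j), c i * h i := by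
      intro j _
      rw [Finset.mul_sum]
      apply Finset.sum_congr rfl
      intro i _
      rw [show j + i - i = j by omega, hc_add j i]
      ring
    rw [Finset.sum_congr rfl he]
    apply Finset.sum_le_sum
    intro j _
    have hx : 0 ≤ c j * Z j := mul_nonneg (hc_pos j).le (hZ0 j)
    calc (c j * Z j) * ∑ i ∈ Finset.range (T + 1 - j), c i * h i
        ≤ (c j * Z j) * 1 := mul_le_mul_of_nonneg_left (hP (T + 1 - j)) hx
      _ = c j * Z j := mul_one _
  have expand : ∑ k ∈ Finset.range (T + 1), c k * (G k - Z k)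
      = (∑ k ∈ Finset.range (T + 1), c k * G k)
        - ∑ k ∈ Finset.range (T + 1), c k * Z k := by
    rw [← Finset.sum_sub_distrib]
    apply Finset.sum_congr rfl
    intro k _
    ring
  have final : ∑ k ∈ Finset.range (T + 1),
      c k * (φ (y k) * (ψ (y k) - ∑ i ∈ Finset.range (k + 1), h i * ψ (y (k - i)))) ≥ 0 := by
    rw [goal_eq]
    linarith [step1, step2.le, step3, step4, expand.le, expand.ge]
  exact final
end

section
/- Let 0 ≤ α ≤ β be reals and let Δ : ℝ → ℝ satisfy Δ(0) = 0 and be slope-restricted on [α,β], i.e. α(x−y)² ≤ (Δ(x)−Δ(y))(x−y) ≤ β(x−y)² for all x, y ∈ ℝ. Define g : ℝ → ℝ by g(x) = ∫_0^x Δ(t) dt. Then g is differentiable with derivative Δ, g(0) = 0, g(x) ≥ (α/2)x² ≥ 0 for all x, the function x ↦ g(x) − (α/2)x² is convex, and the function x ↦ (β/2)x² − g(x) is convex. -/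
/-!
Slope restriction says exactly that `Δ x - α x` and `β x - Δ x` are monotone. The first, with
`α ≥ 0`, makes `Δ` monotone, and together with the second it makes `Δ` `β`-Lipschitz, hence
continuous; so `g` is a primitive of `Δ` by the fundamental theorem of calculus. The functions
`g x - (α/2) x²` and `(β/2) x² - g x` then have the monotone derivatives above and are convex.
The first one has derivative `Δ 0 = 0` at `0`, so by convexity it attains its minimum `0` there.
-/

open Set

lemma monotone_sub_const_mul_of_le_slope {f : ℝ → ℝ} {α : ℝ}
    (h : ∀ x y, α * (x - y) ^ 2 ≤ (f x - f y) * (x - y)) :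
    Monotone fun x => f x - α * x := by
  intro x y hxy
  rcases hxy.eq_or_lt with rfl | hlt
  · rfl
  have key : α * (y - x) * (y - x) ≤ (f y - f x) * (y - x) := by
    simpa only [sq, mul_assoc] using h y x
  have : α * (y - x) ≤ f y - f x := le_of_mul_le_mul_right key (sub_pos.mpr hlt)
  dsimp only
  linarith

lemma monotone_const_mul_sub_of_slope_le {f : ℝ → ℝ} {β : ℝ}
    (h : ∀ x y, (f x - f y) * (x - y) ≤ β * (x - y) ^ 2) :
    Monotone fun x => β * x - f x := by
  intro x y hxy
  rcases hxy.eq_or_lt with rfl | hlt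
  · rfl
  have key : (f y - f x) * (y - x) ≤ β * (y - x) * (y - x) := by
    simpa only [sq, mul_assoc] using h y x
  have : f y - f x ≤ β * (y - x) := le_of_mul_le_mul_right key (sub_pos.mpr hlt)
  dsimp only
  linarith

lemma lipschitzWith_of_monotone_of_monotone_const_mul_sub {f : ℝ → ℝ} {K : ℝ}
    (hf : Monotone f) (hKf : Monotone fun x => K * x - f x) :
    LipschitzWith K.toNNReal f := by
  refine LipschitzWith.of_le_add_mul' K fun x y => ?_
  rw [Real.dist_eq]
  rcases le_total x y with hxy | hyx
  · rw [abs_sub_comm, abs_of_nonneg (sub_nonneg.mpr hxy)]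
    linarith [hf hxy, hKf hxy]
  · rw [abs_of_nonneg (sub_nonneg.mpr hyx)]
    linarith [show K * y - f y ≤ K * x - f x from hKf hyx]

lemma convexOn_univ_of_hasDerivAt_of_monotone {f f' : ℝ → ℝ}
    (hf : ∀ x, HasDerivAt f (f' x) x) (hf' : Monotone f') : ConvexOn ℝ univ f := by
  have hderiv : deriv f = f' := funext fun x => (hf x).deriv
  exact Monotone.convexOn_univ_of_deriv (fun x => (hf x).differentiableAt) (hderiv ▸ hf')

lemma ConvexOn.isMinOn_of_hasDerivAt_eq_zero {S : Set ℝ} {f : ℝ → ℝ} {x : ℝ}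
    (hf : ConvexOn ℝ S f) (hx : x ∈ interior S) (hfx : HasDerivAt f 0 x) : IsMinOn f S x :=
  hf.isMinOn_of_rightDeriv_eq_zero hx (hfx.hasDerivWithinAt.derivWithin (uniqueDiffWithinAt_Ioi x))

lemma hasDerivAt_half_mul_sq (c x : ℝ) : HasDerivAt (fun x => c / 2 * x ^ 2) (c * x) x :=
  ((hasDerivAt_pow 2 x).const_mul (c / 2)).congr_deriv (by ring)

theorem slope_restricted_potential_general
    (α β : ℝ) (hα : 0 ≤ α)
    (Δ : ℝ → ℝ) (hΔ_zero : Δ 0 = 0)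
    (hslope : ∀ x y : ℝ,
      α * (x - y) ^ 2 ≤ (Δ x - Δ y) * (x - y) ∧ (Δ x - Δ y) * (x - y) ≤ β * (x - y) ^ 2)
    (g : ℝ → ℝ) (hg : ∀ x : ℝ, g x = ∫ t in (0 : ℝ)..x, Δ t) :
    (∀ x : ℝ, HasDerivAt g (Δ x) x) ∧
    g 0 = 0 ∧
    (∀ x : ℝ, α / 2 * x ^ 2 ≤ g x ∧ 0 ≤ α / 2 * x ^ 2) ∧
    ConvexOn ℝ Set.univ (fun x : ℝ => g x - α / 2 * x ^ 2) ∧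
    ConvexOn ℝ Set.univ (fun x : ℝ => β / 2 * x ^ 2 - g x) := by
  have hmono_lo := monotone_sub_const_mul_of_le_slope fun x y => (hslope x y).1
  have hmono_hi := monotone_const_mul_sub_of_slope_le fun x y => (hslope x y).2
  have hmono : Monotone Δ := fun x y hxy => by
    simpa using add_le_add (hmono_lo hxy) (mul_le_mul_of_nonneg_left hxy hα)
  have hcont : Continuous Δ :=
    (lipschitzWith_of_monotone_of_monotone_const_mul_sub hmono hmono_hi).continuous
  have hderiv : ∀ x, HasDerivAt g (Δ x) x := fun x => by
    rw [show g = _ from funext hg]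
    exact (hcont.integral_hasStrictDerivAt 0 x).hasDerivAt
  have hg0 : g 0 = 0 := by simp [hg]
  have hderiv_lo x := (hderiv x).sub (hasDerivAt_half_mul_sq α x)
  have hconv_lo := convexOn_univ_of_hasDerivAt_of_monotone hderiv_lo hmono_lo
  have hconv_hi := convexOn_univ_of_hasDerivAt_of_monotone
    (fun x => (hasDerivAt_half_mul_sq β x).sub (hderiv x)) hmono_hi
  have hmin := hconv_lo.isMinOn_of_hasDerivAt_eq_zero (by simp)
    (by simpa [hΔ_zero] using hderiv_lo 0)
  refine ⟨hderiv, hg0, fun x => ⟨?_, by positivity⟩, hconv_lo, hconv_hi⟩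
  simpa [hg0] using hmin (mem_univ x)

/-- Construction of the nonnegative convex potential of a scalar slope-restricted
nonlinearity: if `Δ : ℝ → ℝ` satisfies `Δ(0) = 0` and is slope-restricted on `[α,β]`
(`0 ≤ α ≤ β`), then `g(x) = ∫_0^x Δ(t) dt` is differentiable with derivative `Δ`,
vanishes at `0`, satisfies `g(x) ≥ (α/2)x² ≥ 0`, and both `g − (α/2)(·)²` and
`(β/2)(·)² − g` are convex. -/
theorem slope_restricted_potential
    (α β : ℝ) (hα : 0 ≤ α) (hαβ : α ≤ β)
    (Δ : ℝ → ℝ) (hΔ_zero : Δ 0 = 0)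
    (hslope : ∀ x y : ℝ,
      α * (x - y) ^ 2 ≤ (Δ x - Δ y) * (x - y) ∧ (Δ x - Δ y) * (x - y) ≤ β * (x - y) ^ 2)
    (g : ℝ → ℝ) (hg : ∀ x : ℝ, g x = ∫ t in (0 : ℝ)..x, Δ t) :
    (∀ x : ℝ, HasDerivAt g (Δ x) x) ∧
    g 0 = 0 ∧
    (∀ x : ℝ, α / 2 * x ^ 2 ≤ g x ∧ 0 ≤ α / 2 * x ^ 2) ∧
    ConvexOn ℝ Set.univ (fun x : ℝ => g x - α / 2 * x ^ 2) ∧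
    ConvexOn ℝ Set.univ (fun x : ℝ => β / 2 * x ^ 2 - g x) :=
  slope_restricted_potential_general α β hα Δ hΔ_zero hslope g hg
end

section
/- Let A be an n×n complex matrix with no eigenvalue of absolute value 1, let B be an n×m complex matrix, and let M be an (n+m)×(n+m) Hermitian complex matrix. Then the following are equivalent: (i) for every z ∈ ℂ with |z| = 1, the m×m Hermitian matrix [(zI−A)^{-1}B ; I]ᴴ M [(zI−A)^{-1}B ; I] is negative definite (here [(zI−A)^{-1}B ; I] denotes the (n+m)×m matrix obtained by stacking (zI−A)^{-1}B on top of the m×m identity); (ii) there exist a Hermitian n×n matrix P and a real λ ≥ 0 such that the (n+m)×(n+m) Hermitian matrix [A B; I 0]ᴴ · blockDiag(P, −P) · [A B; I 0] + λM is negative definite, where [A B; I 0] is the (2n)×(n+m) block matrix with first block row [A B] and second block row [I 0], and blockDiag(P,−P) is the 2n×2n block-diagonal matrix with blocks P and −P. -/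
/-!
On a trajectory `v = (x, u)` with `A x + B u = z x` and `|z| = 1` the storage term
`Fᴴ diag(P, -P) F` vanishes, so there the LMI reads `λ vᴴ M v < 0`. The trajectories are exactly
the vectors `[(zI - A)⁻¹B; I] u`, which gives the easy direction.

Conversely, if no `(P, λ)` works, the convex cone `{Fᴴ diag(P, -P) F + λ M}` misses the open convex
cone of negative definite matrices. A separating functional is `X ↦ re tr(Z X)` with `Z ⪰ 0`,
`Z ≠ 0`, `re tr(Z M) ≥ 0`, and, because the `P`-part is a subspace, `E₁ Z E₁ᴴ = E₂ Z E₂ᴴ` for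
`E₁ = [A B]`, `E₂ = [I 0]`. Writing `Z = T Tᴴ`, this gives `E₁ T = E₂ T U` with `U` unitary, and
the spectral projections of `U` split `Z` into a sum of `R Rᴴ` whose columns `r` satisfy
`E₁ r = z E₂ r` for an eigenvalue `z` of `U`, i.e. are trajectories with `|z| = 1`. On these `M` is
negative definite by the frequency inequality, so `re tr(Z M) < 0`, a contradiction.
-/

open Matrix ComplexOrder

theorem PointedCone.exists_strongDual_neg_nonneg_of_isOpen {E : Type*} [AddCommGroup E]
    [Module ℝ E] [TopologicalSpace E] [IsTopologicalAddGroup E] [ContinuousSMul ℝ E]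
    [LocallyConvexSpace ℝ E] {C : Set E} (hCconv : Convex ℝ C) (hCopen : IsOpen C)
    (K : PointedCone ℝ E) (hCK : Disjoint C K) :
    ∃ f : StrongDual ℝ E, (∀ x ∈ C, f x < 0) ∧ ∀ x ∈ K, 0 ≤ f x := by
  obtain ⟨f, u, hfC, hfK⟩ := geometric_hahn_banach_open hCconv hCopen K.convex hCK
  have hu : u ≤ 0 := by simpa using hfK 0 K.zero_mem
  refine ⟨f, fun x hx => (hfC x hx).trans_le hu, fun x hx => ?_⟩
  by_contra! hx₀
  have hc : 0 ≤ u * (f x)⁻¹ + 1 := by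
    have := mul_nonneg_of_nonpos_of_nonpos hu (inv_nonpos.mpr hx₀.le)
    linarith
  have h := hfK _ (K.smul_mem hc hx)
  rw [map_smul, smul_eq_mul, add_mul, mul_assoc, inv_mul_cancel₀ hx₀.ne] at h
  linarith

namespace Matrix

variable {ι κ τ : Type*} [Fintype ι]

theorem dotProduct_conjTranspose_mul_mul_mulVec [Fintype κ] (E : Matrix ι κ ℂ)
    (P : Matrix ι ι ℂ) (v : κ → ℂ) :
    star v ⬝ᵥ (Eᴴ * P * E) *ᵥ v = star (E *ᵥ v) ⬝ᵥ P *ᵥ (E *ᵥ v) := by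
  rw [← mulVec_mulVec, ← mulVec_mulVec, dotProduct_mulVec, ← star_mulVec]

theorem trace_mul_vecMulVec_star (Z : Matrix ι ι ℂ) (x : ι → ℂ) :
    trace (Z * vecMulVec x (star x)) = star x ⬝ᵥ Z *ᵥ x := by
  rw [mul_vecMulVec, trace_vecMulVec, dotProduct_comm]

theorem trace_conjTranspose_mul_mul [Fintype τ] (R : Matrix ι τ ℂ) (M : Matrix ι ι ℂ) :
    trace (Rᴴ * M * R) = ∑ j, star (R.col j) ⬝ᵥ M *ᵥ R.col j := by
  rw [Matrix.mul_assoc]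
  simp only [trace, diag, mul_apply, mulVec, dotProduct, col_apply, conjTranspose_apply,
    Pi.star_apply]

theorem IsHermitian.eq_zero_of_forall_re_trace_mul_eq_zero {H : Matrix ι ι ℂ}
    (hH : H.IsHermitian) (h : ∀ P : Matrix ι ι ℂ, P.IsHermitian → (trace (P * H)).re = 0) :
    H = 0 := by
  have hnonneg := Complex.nonneg_iff.mp (posSemidef_conjTranspose_mul_self H).trace_nonneg
  rw [← trace_conjTranspose_mul_self_eq_zero_iff]
  refine Complex.ext ?_ hnonneg.2.symm
  simpa [hH.eq] using h H hH

theorem IsHermitian.posDef_neg_of_re_dotProduct_mulVec_neg {Y : Matrix ι ι ℂ}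
    (hY : Y.IsHermitian) (h : ∀ v ≠ 0, (star v ⬝ᵥ Y *ᵥ v).re < 0) : (-Y).PosDef := by
  refine PosDef.of_dotProduct_mulVec_pos hY.neg fun v hv => Complex.pos_iff.mpr ⟨?_, ?_⟩
  · simpa [neg_mulVec] using h v hv
  · simpa [neg_mulVec] using hY.im_star_dotProduct_mulVec_self v

theorem PosSemidef.re_dotProduct_neg_sub_smul_one_mulVec_neg [DecidableEq ι]
    {P : Matrix ι ι ℂ} (hP : P.PosSemidef) {ε : ℝ} (hε : 0 < ε) {v : ι → ℂ} (hv : v ≠ 0) :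
    (star v ⬝ᵥ (-P - ε • (1 : Matrix ι ι ℂ)) *ᵥ v).re < 0 := by
  have h₁ := Complex.nonneg_iff.mp (hP.dotProduct_mulVec_nonneg v)
  have h₂ := Complex.pos_iff.mp (dotProduct_star_self_pos_iff.mpr hv)
  simp only [sub_mulVec, neg_mulVec, smul_mulVec, one_mulVec, dotProduct_sub, dotProduct_neg,
    dotProduct_smul, Complex.sub_re, Complex.neg_re, Complex.smul_re, smul_eq_mul]
  nlinarith [h₁.1, h₂.1]

theorem convex_setOf_forall_re_dotProduct_mulVec_neg :
    Convex ℝ {X : Matrix ι ι ℂ | ∀ v ≠ 0, (star v ⬝ᵥ X *ᵥ v).re < 0} := by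
  intro X hX Y hY a b ha hb hab v hv
  have h : (star v ⬝ᵥ (a • X + b • Y) *ᵥ v).re =
      a * (star v ⬝ᵥ X *ᵥ v).re + b * (star v ⬝ᵥ Y *ᵥ v).re := by
    simp [add_mulVec, smul_mulVec]
  rw [h]
  rcases ha.eq_or_lt with rfl | ha
  · simp only [zero_add] at hab
    subst hab
    nlinarith [hY v hv]
  · nlinarith [hX v hv, hY v hv]

theorem isOpen_setOf_forall_re_dotProduct_mulVec_neg :
    IsOpen {X : Matrix ι ι ℂ | ∀ v ≠ 0, (star v ⬝ᵥ X *ᵥ v).re < 0} := by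
  have hq : Continuous fun p : Matrix ι ι ℂ × (ι → ℂ) => (star p.2 ⬝ᵥ p.1 *ᵥ p.2).re := by
    fun_prop
  have hsphere : {X : Matrix ι ι ℂ | ∀ v ≠ 0, (star v ⬝ᵥ X *ᵥ v).re < 0} =
      {X | ∀ v ∈ Metric.sphere (0 : ι → ℂ) 1, (star v ⬝ᵥ X *ᵥ v).re < 0} := by
    ext X
    refine ⟨fun h v hv => h v (ne_zero_of_mem_unit_sphere ⟨v, hv⟩), fun h v hv => ?_⟩
    have hn : ‖v‖ ≠ 0 := norm_ne_zero_iff.mpr hv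
    have hw := h ((‖v‖⁻¹ : ℂ) • v) (by simp [norm_smul, hn])
    rw [star_smul, mulVec_smul, smul_dotProduct, dotProduct_smul, smul_smul, smul_eq_mul,
      ← Complex.ofReal_inv, Complex.star_def, Complex.conj_ofReal, ← Complex.ofReal_mul,
      Complex.re_ofReal_mul] at hw
    exact neg_of_mul_neg_right hw (by positivity)
  rw [hsphere, isOpen_iff_mem_nhds]
  exact fun X hX => (isCompact_sphere _ _).eventually_forall_of_forall_eventually fun v hv =>
    hq.continuousAt.eventually (gt_mem_nhds (hX v hv))

theorem exists_trace_mul_eq [DecidableEq ι] (g : Module.Dual ℂ (Matrix ι ι ℂ)) :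
    ∃ W : Matrix ι ι ℂ, ∀ X, g X = trace (W * X) := by
  refine ⟨of fun i j => g (single j i 1), fun X => ?_⟩
  conv_lhs => rw [matrix_eq_sum_single X]
  simp only [map_sum, trace, diag, mul_apply, of_apply]
  rw [Finset.sum_comm]
  refine Finset.sum_congr rfl fun i _ => Finset.sum_congr rfl fun j _ => ?_
  rw [show single j i (X j i) = X j i • single j i 1 by rw [smul_single, smul_eq_mul, mul_one],
    map_smul, smul_eq_mul, mul_comm]

theorem exists_isHermitian_re_trace_mul_eq [DecidableEq ι] (f : Module.Dual ℝ (Matrix ι ι ℂ)) :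
    ∃ Z : Matrix ι ι ℂ, Z.IsHermitian ∧ ∀ X, X.IsHermitian → f X = (trace (Z * X)).re := by
  obtain ⟨W, hW⟩ := exists_trace_mul_eq (f.extendRCLike (𝕜 := ℂ))
  refine ⟨(2⁻¹ : ℝ) • (W + Wᴴ), ?_, fun X hX => ?_⟩
  · simp [IsHermitian, conjTranspose_smul, add_comm]
  · have h : trace (Wᴴ * X) = star (trace (W * X)) := by
      rw [← trace_conjTranspose, conjTranspose_mul, hX.eq, trace_mul_comm]
    rw [smul_mul_assoc, trace_smul, add_mul, trace_add, h, ← hW, Complex.star_def,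
      Complex.add_conj, Complex.real_smul, ← Complex.ofReal_mul, Complex.ofReal_re,
      inv_mul_cancel_left₀ two_ne_zero]
    exact (f.re_extendRCLike_apply (𝕜 := ℂ) X).symm

theorem posSemidef_and_ne_zero_of_forall_re_trace_mul_neg [DecidableEq ι] {Z : Matrix ι ι ℂ}
    (hZ : Z.IsHermitian) (h : ∀ X : Matrix ι ι ℂ, X.IsHermitian →
      (∀ v ≠ 0, (star v ⬝ᵥ X *ᵥ v).re < 0) → (trace (Z * X)).re < 0) :
    Z.PosSemidef ∧ Z ≠ 0 := by
  have hneg : ∀ P : Matrix ι ι ℂ, P.PosSemidef → ∀ ε : ℝ, 0 < ε →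
      -(trace (Z * P)).re - ε * (trace Z).re < 0 := by
    intro P hP ε hε
    have h := h _ (hP.1.neg.sub (isHermitian_one.smul (IsSelfAdjoint.all ε)))
      fun v hv => hP.re_dotProduct_neg_sub_smul_one_mulVec_neg hε hv
    rwa [Matrix.mul_sub, Matrix.mul_neg, mul_smul_comm, Matrix.mul_one, trace_sub, trace_neg,
      trace_smul, Complex.sub_re, Complex.neg_re, Complex.smul_re, smul_eq_mul] at h
  have htr : 0 < (trace Z).re := by simpa using hneg 0 PosSemidef.zero 1 one_pos
  refine ⟨PosSemidef.of_dotProduct_mulVec_nonneg hZ fun x => ?_, by rintro rfl; simp at htr⟩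
  refine Complex.nonneg_iff.mpr ⟨?_, (hZ.im_star_dotProduct_mulVec_self x).symm⟩
  have h := hneg _ (posSemidef_vecMulVec_self_star x)
  rw [trace_mul_vecMulVec_star] at h
  by_contra! hq
  simpa [div_mul_cancel₀ _ htr.ne'] using h (-(star x ⬝ᵥ Z *ᵥ x).re / (trace Z).re)
    (div_pos (neg_pos.mpr hq) htr)

theorem exists_posSemidef_forall_mem_re_trace_mul_nonneg [DecidableEq ι]
    (K : PointedCone ℝ (Matrix ι ι ℂ)) (hK : ∀ X ∈ K, X.IsHermitian)
    (h : ∀ X ∈ K, ¬(-X).PosDef) :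
    ∃ Z : Matrix ι ι ℂ, Z.PosSemidef ∧ Z ≠ 0 ∧ ∀ X ∈ K, 0 ≤ (trace (Z * X)).re := by
  have hCK : Disjoint {X : Matrix ι ι ℂ | ∀ v ≠ 0, (star v ⬝ᵥ X *ᵥ v).re < 0} K :=
    Set.disjoint_left.mpr fun X hXC hXK =>
      h X hXK ((hK X hXK).posDef_neg_of_re_dotProduct_mulVec_neg hXC)
  have : LocallyConvexSpace ℝ (Matrix ι ι ℂ) :=
    inferInstanceAs (LocallyConvexSpace ℝ (ι → ι → ℂ))
  obtain ⟨f, hfC, hfK⟩ := PointedCone.exists_strongDual_neg_nonneg_of_isOpen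
    convex_setOf_forall_re_dotProduct_mulVec_neg isOpen_setOf_forall_re_dotProduct_mulVec_neg
    K hCK
  obtain ⟨Z, hZ, hfZ⟩ := exists_isHermitian_re_trace_mul_eq f.toLinearMap
  replace hfZ : ∀ X, X.IsHermitian → f X = (trace (Z * X)).re := hfZ
  obtain ⟨hZpsd, hZ0⟩ := posSemidef_and_ne_zero_of_forall_re_trace_mul_neg hZ
    fun X hX hXC => hfZ X hX ▸ hfC X hXC
  exact ⟨Z, hZpsd, hZ0, fun X hX => hfZ X (hK X hX) ▸ hfK X hX⟩

theorem exists_posSemidef_of_forall_not_posDef [DecidableEq ι] {M : Matrix ι ι ℂ}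
    (hM : M.IsHermitian) (V : Submodule ℝ (Matrix ι ι ℂ)) (hV : ∀ X ∈ V, X.IsHermitian)
    (h : ∀ X ∈ V, ∀ lam : ℝ, 0 ≤ lam → ¬(-(X + lam • M)).PosDef) :
    ∃ Z : Matrix ι ι ℂ, Z.PosSemidef ∧ Z ≠ 0 ∧ (∀ X ∈ V, (trace (Z * X)).re = 0) ∧
      0 ≤ (trace (Z * M)).re := by
  let K : PointedCone ℝ (Matrix ι ι ℂ) :=
    { carrier := {Y | ∃ X ∈ V, ∃ lam : ℝ, 0 ≤ lam ∧ Y = X + lam • M}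
      add_mem' := by
        rintro _ _ ⟨X, hX, l, hl, rfl⟩ ⟨X', hX', l', hl', rfl⟩
        exact ⟨X + X', V.add_mem hX hX', l + l', add_nonneg hl hl', by rw [add_smul]; abel⟩
      zero_mem' := ⟨0, V.zero_mem, 0, le_rfl, by simp⟩
      smul_mem' := by
        rintro ⟨c, hc⟩ _ ⟨X, hX, l, hl, rfl⟩
        exact ⟨c • X, V.smul_mem c hX, c * l, mul_nonneg hc hl, by
          simp [Nonneg.mk_smul, smul_add, mul_smul]⟩ }
  have hVK : ∀ X ∈ V, X ∈ K := fun X hX => ⟨X, hX, 0, le_rfl, by simp⟩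
  obtain ⟨Z, hZ, hZ0, hZK⟩ := exists_posSemidef_forall_mem_re_trace_mul_nonneg K
    (by rintro _ ⟨X, hX, l, -, rfl⟩; exact (hV X hX).add (hM.smul (IsSelfAdjoint.all l)))
    (by rintro _ ⟨X, hX, l, hl, rfl⟩; exact h X hX l hl)
  refine ⟨Z, hZ, hZ0, fun X hX => ?_, hZK M ⟨0, V.zero_mem, 1, zero_le_one, by simp⟩⟩
  have h₁ := hZK X (hVK X hX)
  have h₂ := hZK (-X) (hVK (-X) (V.neg_mem hX))
  rw [Matrix.mul_neg, trace_neg, Complex.neg_re] at h₂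
  linarith

theorem inner_toLpLin_conjTranspose_self [DecidableEq ι] [Fintype κ] (A : Matrix ι κ ℂ)
    (w : EuclideanSpace ℂ ι) :
    inner ℂ (toLpLin 2 2 Aᴴ w) (toLpLin 2 2 Aᴴ w) =
      star (WithLp.ofLp w) ⬝ᵥ (A * Aᴴ) *ᵥ WithLp.ofLp w := by
  rw [EuclideanSpace.inner_eq_star_dotProduct, ofLp_toLpLin, toLin'_apply, star_mulVec,
    conjTranspose_conjTranspose, dotProduct_comm, ← dotProduct_mulVec, mulVec_mulVec]

theorem exists_mem_unitary_eq_mul_of_mul_conjTranspose_eq [DecidableEq ι] [Fintype κ]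
    [DecidableEq κ] {X Y : Matrix ι κ ℂ} (h : X * Xᴴ = Y * Yᴴ) :
    ∃ U ∈ unitary (Matrix κ κ ℂ), X = Y * U := by
  -- `Yᴴ w ↦ Xᴴ w` is a well-defined isometry on the range of `Yᴴ`; extend it to a unitary.
  set f := toLpLin 2 2 Xᴴ
  set g := toLpLin 2 2 Yᴴ
  have hnorm : ∀ w, ‖f w‖ = ‖g w‖ := by
    intro w
    have := congrArg Complex.re ((inner_toLpLin_conjTranspose_self X w).trans
      (h ▸ (inner_toLpLin_conjTranspose_self Y w).symm))
    rw [← sq_eq_sq₀ (norm_nonneg _) (norm_nonneg _), @norm_sq_eq_re_inner ℂ,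
      @norm_sq_eq_re_inner ℂ]
    exact this
  have hker : LinearMap.ker g ≤ LinearMap.ker f := fun w hw => by
    rw [LinearMap.mem_ker, ← norm_eq_zero, hnorm, norm_eq_zero, ← LinearMap.mem_ker]
    exact hw
  let φ := (LinearMap.ker g).liftQ f hker ∘ₗ g.quotKerEquivRange.symm.toLinearMap
  have hφ : ∀ w, φ ⟨g w, LinearMap.mem_range_self g w⟩ = f w := fun w => by
    simp [φ, LinearMap.quotKerEquivRange_symm_apply_image]
  let L : LinearMap.range g →ₗᵢ[ℂ] EuclideanSpace ℂ κ :=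
    { φ with
      norm_map' := by
        rintro ⟨_, w, rfl⟩
        exact (congrArg norm (hφ w)).trans (hnorm w) }
  let b := (EuclideanSpace.basisFun κ ℂ).toBasis
  let V := L.extend.toLinearIsometryEquiv rfl
  have hV : toLpLin 2 2 (LinearMap.toMatrix b b V.toLinearMap) = V.toLinearMap := by
    rw [toLpLin_eq_toLin]
    exact toLin_toMatrix b b _
  have hU : LinearMap.toMatrix b b V.toLinearMap ∈ unitary (Matrix κ κ ℂ) :=
    V.toMatrix_mem_unitaryGroup _ _
  refine ⟨star (LinearMap.toMatrix b b V.toLinearMap), Unitary.star_mem hU, ?_⟩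
  have hVY : LinearMap.toMatrix b b V.toLinearMap * Yᴴ = Xᴴ := by
    apply (toLpLin 2 2).injective
    rw [toLpLin_mul _ 2, hV]
    ext1 w
    exact (L.extend_apply ⟨g w, LinearMap.mem_range_self g w⟩).trans (hφ w)
  rw [star_eq_conjTranspose, ← conjTranspose_conjTranspose X, ← hVY, conjTranspose_mul,
    conjTranspose_conjTranspose]

open scoped Matrix.Norms.L2Operator in
theorem exists_sum_mul_conjTranspose_eq_one_of_mem_unitary [Fintype κ] [DecidableEq κ]
    {U : Matrix κ κ ℂ} (hU : U ∈ unitary (Matrix κ κ ℂ)) :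
    ∃ (s : Finset ℂ) (P : ℂ → Matrix κ κ ℂ), (∀ z ∈ s, ‖z‖ = 1 ∧ U * P z = z • P z) ∧
      ∑ z ∈ s, P z * (P z)ᴴ = 1 := by
  have : IsStarNormal U := ⟨by
    rw [commute_iff_eq, Unitary.star_mul_self_of_mem hU, Unitary.mul_star_self_of_mem hU]⟩
  have hfin := Matrix.finite_spectrum (R := ℂ) U
  have hcont : ∀ f : ℂ → ℂ, ContinuousOn f (spectrum ℂ U) := hfin.continuousOn
  let e (z w : ℂ) : ℂ := if w = z then 1 else 0
  refine ⟨hfin.toFinset, fun z => cfc (e z) U, fun z hz => ⟨?_, ?_⟩, ?_⟩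
  · simpa using spectrum.subset_circle_of_unitary hU (hfin.mem_toFinset.mp hz)
  · calc U * cfc (e z) U = cfc (fun w => w * e z w) U := by
          rw [cfc_mul _ _ _ (hcont _) (hcont _), cfc_id' ℂ U]
      _ = cfc (fun w => z * e z w) U := by
          congr 1; funext w; by_cases h : w = z <;> simp [e, h]
      _ = z • cfc (e z) U := by rw [cfc_const_mul _ _ _ (hcont _)]
  · have hproj : ∀ z, cfc (e z) U * (cfc (e z) U)ᴴ = cfc (e z) U := by
      intro z
      rw [← star_eq_conjTranspose, ← cfc_star, ← cfc_mul _ _ _ (hcont _) (hcont _)]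
      congr 1; funext w; by_cases h : w = z <;> simp [e, h]
    simp_rw [hproj]
    rw [← cfc_sum _ _ _ (fun _ _ => hcont _), ← cfc_one ℂ U]
    refine cfc_congr fun w hw => ?_
    simp [e, hfin.mem_toFinset.mpr hw]

open scoped MatrixOrder in
theorem PosSemidef.exists_sum_mul_conjTranspose_eq [DecidableEq ι] [Fintype κ] [DecidableEq κ]
    {Z : Matrix κ κ ℂ} (hZ : Z.PosSemidef) {E₁ E₂ : Matrix ι κ ℂ}
    (h : E₁ * Z * E₁ᴴ = E₂ * Z * E₂ᴴ) :
    ∃ (s : Finset ℂ) (R : ℂ → Matrix κ κ ℂ),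
      (∀ z ∈ s, ‖z‖ = 1 ∧ E₁ * R z = z • (E₂ * R z)) ∧ Z = ∑ z ∈ s, R z * (R z)ᴴ := by
  obtain ⟨B, rfl⟩ := CStarAlgebra.nonneg_iff_eq_star_mul_self.mp hZ.nonneg
  rw [star_eq_conjTranspose] at h ⊢
  obtain ⟨U, hU, hXY⟩ := exists_mem_unitary_eq_mul_of_mul_conjTranspose_eq
    (X := E₁ * Bᴴ) (Y := E₂ * Bᴴ) (by simpa [conjTranspose_mul, Matrix.mul_assoc] using h)
  obtain ⟨s, P, hP, hsum⟩ := exists_sum_mul_conjTranspose_eq_one_of_mem_unitary hU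
  refine ⟨s, fun z => Bᴴ * P z, fun z hz => ⟨(hP z hz).1, ?_⟩, ?_⟩
  · rw [← Matrix.mul_assoc, hXY, Matrix.mul_assoc, (hP z hz).2, Matrix.mul_smul,
      Matrix.mul_assoc]
  · simp_rw [conjTranspose_mul, Matrix.mul_assoc, ← Matrix.mul_assoc (P _), ← Finset.mul_sum,
      ← Finset.sum_mul, hsum, Matrix.one_mul, conjTranspose_conjTranspose]

theorem sum_mul_conjTranspose_eq_zero_of_re_trace_mul_nonneg [Fintype τ] {ι' : Type*}
    {s : Finset ι'} {R : ι' → Matrix ι τ ℂ} {M : Matrix ι ι ℂ}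
    (hR : ∀ i ∈ s, ∀ j, (R i).col j ≠ 0 → (star ((R i).col j) ⬝ᵥ M *ᵥ (R i).col j).re < 0)
    (h : 0 ≤ (trace ((∑ i ∈ s, R i * (R i)ᴴ) * M)).re) : ∑ i ∈ s, R i * (R i)ᴴ = 0 := by
  have hle : ∀ i ∈ s, ∀ j, (star ((R i).col j) ⬝ᵥ M *ᵥ (R i).col j).re ≤ 0 := by
    intro i hi j
    by_cases hj : (R i).col j = 0
    · simp [hj]
    · exact (hR i hi j hj).le
  have hsum : (trace ((∑ i ∈ s, R i * (R i)ᴴ) * M)).re =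
      ∑ i ∈ s, ∑ j, (star ((R i).col j) ⬝ᵥ M *ᵥ (R i).col j).re := by
    rw [Finset.sum_mul, trace_sum, Complex.re_sum]
    refine Finset.sum_congr rfl fun i _ => ?_
    rw [trace_mul_cycle, trace_mul_cycle, trace_conjTranspose_mul_mul, Complex.re_sum]
  rw [hsum] at h
  have hzero := (Finset.sum_eq_zero_iff_of_nonpos fun i hi => Finset.sum_nonpos fun j _ =>
    hle i hi j).mp (le_antisymm (Finset.sum_nonpos fun i hi => Finset.sum_nonpos fun j _ =>
    hle i hi j) h)
  refine Finset.sum_eq_zero fun i hi => ?_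
  have hRi : R i = 0 := by
    ext k j
    by_contra hkj
    have hj : (R i).col j ≠ 0 := fun hj => hkj (congrFun hj k)
    have := (Finset.sum_eq_zero_iff_of_nonpos fun j _ => hle i hi j).mp (hzero i hi) j
      (Finset.mem_univ j)
    exact (hR i hi j hj).ne this
  simp [hRi]

/-- For `E₁ = A` and `E₂ = 1` this is the Stein operator `P ↦ AᴴPA - P`. -/
def steinMap (E₁ E₂ : Matrix ι τ ℂ) : Matrix ι ι ℂ →ₗ[ℝ] Matrix τ τ ℂ where
  toFun P := E₁ᴴ * P * E₁ - E₂ᴴ * P * E₂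
  map_add' P Q := by simp only [Matrix.mul_add, Matrix.add_mul]; abel
  map_smul' c P := by simp only [Matrix.mul_smul, Matrix.smul_mul, smul_sub, RingHom.id_apply]

theorem steinMap_apply (E₁ E₂ : Matrix ι τ ℂ) (P : Matrix ι ι ℂ) :
    steinMap E₁ E₂ P = E₁ᴴ * P * E₁ - E₂ᴴ * P * E₂ := rfl

theorem IsHermitian.steinMap {P : Matrix ι ι ℂ} (hP : P.IsHermitian) (E₁ E₂ : Matrix ι τ ℂ) :
    (steinMap E₁ E₂ P).IsHermitian :=
  (isHermitian_conjTranspose_mul_mul E₁ hP).sub (isHermitian_conjTranspose_mul_mul E₂ hP)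

theorem conjTranspose_fromRows_mul_fromBlocks_mul_fromRows [Fintype τ] (E₁ E₂ : Matrix ι τ ℂ)
    (P : Matrix ι ι ℂ) :
    (fromRows E₁ E₂)ᴴ * fromBlocks P 0 0 (-P) * fromRows E₁ E₂ = steinMap E₁ E₂ P := by
  rw [conjTranspose_fromRows_eq_fromCols_conjTranspose, fromCols_mul_fromBlocks,
    fromCols_mul_fromRows, steinMap_apply]
  simp [sub_eq_add_neg, Matrix.neg_mul, Matrix.mul_neg]

theorem dotProduct_steinMap_mulVec_eq_zero [Fintype τ] {E₁ E₂ : Matrix ι τ ℂ}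
    (P : Matrix ι ι ℂ) {z : ℂ} (hz : ‖z‖ = 1) {v : τ → ℂ} (hv : E₁ *ᵥ v = z • (E₂ *ᵥ v)) :
    star v ⬝ᵥ steinMap E₁ E₂ P *ᵥ v = 0 := by
  rw [steinMap_apply, sub_mulVec, dotProduct_sub, dotProduct_conjTranspose_mul_mul_mulVec,
    dotProduct_conjTranspose_mul_mul_mulVec, hv, star_smul, mulVec_smul, smul_dotProduct,
    dotProduct_smul, smul_smul, smul_eq_mul, Complex.star_def, Complex.conj_mul', hz]
  simp

theorem mul_mul_conjTranspose_eq_of_forall_re_trace_mul_steinMap_eq_zero [Fintype τ]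
    {Z : Matrix τ τ ℂ} (hZ : Z.IsHermitian) {E₁ E₂ : Matrix ι τ ℂ}
    (h : ∀ P : Matrix ι ι ℂ, P.IsHermitian → (trace (Z * steinMap E₁ E₂ P)).re = 0) :
    E₁ * Z * E₁ᴴ = E₂ * Z * E₂ᴴ := by
  refine sub_eq_zero.mp ((isHermitian_mul_mul_conjTranspose E₁ hZ).sub
    (isHermitian_mul_mul_conjTranspose E₂ hZ) |>.eq_zero_of_forall_re_trace_mul_eq_zero
    fun P hP => ?_)
  have hcycle : ∀ E : Matrix ι τ ℂ, trace (P * (E * Z * Eᴴ)) = trace (Z * (Eᴴ * P * E)) :=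
    fun E => by rw [trace_mul_comm, Matrix.mul_assoc, trace_mul_comm, ← Matrix.mul_assoc,
      ← Matrix.mul_assoc, trace_mul_comm, Matrix.mul_assoc Z]
  rw [← h P hP, steinMap_apply, Matrix.mul_sub, Matrix.mul_sub, trace_sub, trace_sub,
    hcycle, hcycle]

section KYP

variable [Fintype κ] [DecidableEq ι] {A : Matrix ι ι ℂ} {B : Matrix ι κ ℂ}

theorem mulVec_add_mulVec_eq_smul_iff {z : ℂ} (hz : IsUnit (z • (1 : Matrix ι ι ℂ) - A))
    (x : ι → ℂ) (u : κ → ℂ) :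
    A *ᵥ x + B *ᵥ u = z • x ↔ x = ((z • (1 : Matrix ι ι ℂ) - A)⁻¹ * B) *ᵥ u := by
  have := hz.invertible
  have hS : (z • (1 : Matrix ι ι ℂ) - A) *ᵥ x = z • x - A *ᵥ x := by
    rw [sub_mulVec, smul_mulVec, one_mulVec]
  rw [← mulVec_mulVec, eq_comm, ← sub_eq_iff_eq_add', ← hS]
  exact ⟨fun h => (inv_mulVec_eq_vec h.symm).symm,
    fun h => by rw [h, mulVec_mulVec, mul_inv_of_invertible, one_mulVec]⟩

variable [DecidableEq κ]

variable (A B) in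
noncomputable def stateInputResponse (z : ℂ) : Matrix (ι ⊕ κ) κ ℂ :=
  fromRows ((z • (1 : Matrix ι ι ℂ) - A)⁻¹ * B) 1

theorem fromCols_mulVec_eq_smul_iff {z : ℂ} (hz : IsUnit (z • (1 : Matrix ι ι ℂ) - A))
    (v : ι ⊕ κ → ℂ) :
    fromCols A B *ᵥ v = z • (fromCols (1 : Matrix ι ι ℂ) (0 : Matrix ι κ ℂ) *ᵥ v) ↔
      v = stateInputResponse A B z *ᵥ (v ∘ Sum.inr) := by
  rw [fromCols_mulVec, fromCols_mulVec, one_mulVec, zero_mulVec, add_zero,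
    mulVec_add_mulVec_eq_smul_iff hz, stateInputResponse, fromRows_mulVec, one_mulVec]
  simp [funext_iff, Sum.forall]

theorem posDef_neg_stateInputResponse_of_posDef_neg {M : Matrix (ι ⊕ κ) (ι ⊕ κ) ℂ}
    (hM : M.IsHermitian) {z : ℂ} (hz : ‖z‖ = 1) (hzA : IsUnit (z • (1 : Matrix ι ι ℂ) - A))
    (P : Matrix ι ι ℂ) {lam : ℝ} (hlam : 0 ≤ lam)
    (h : (-((fromBlocks A B (1 : Matrix ι ι ℂ) 0)ᴴ * fromBlocks P 0 0 (-P) *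
      fromBlocks A B (1 : Matrix ι ι ℂ) 0 + (lam : ℂ) • M)).PosDef) :
    (-((stateInputResponse A B z)ᴴ * M * stateInputResponse A B z)).PosDef := by
  rw [← fromRows_fromCols_eq_fromBlocks A B (1 : Matrix ι ι ℂ) 0,
    conjTranspose_fromRows_mul_fromBlocks_mul_fromRows] at h
  refine PosDef.of_dotProduct_mulVec_pos (isHermitian_conjTranspose_mul_mul _ hM).neg
    fun u hu => ?_
  set v := stateInputResponse A B z *ᵥ u
  have hvu : v ∘ Sum.inr = u := by simp [v, stateInputResponse, fromRows_mulVec]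
  have hv : fromCols A B *ᵥ v = z • (fromCols 1 0 *ᵥ v) :=
    (fromCols_mulVec_eq_smul_iff hzA v).mpr (by rw [hvu])
  have hv0 : v ≠ 0 := fun h0 => hu (by rw [← hvu, h0]; rfl)
  have hpos := Complex.pos_iff.mp (h.dotProduct_mulVec_pos hv0)
  rw [neg_mulVec, dotProduct_neg, add_mulVec, dotProduct_add,
    dotProduct_steinMap_mulVec_eq_zero P hz hv, zero_add, smul_mulVec, dotProduct_smul,
    smul_eq_mul] at hpos
  simp only [Complex.neg_re, Complex.neg_im, Complex.re_ofReal_mul, Complex.im_ofReal_mul,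
    neg_pos] at hpos
  have hlam' : 0 < lam := hlam.lt_of_ne (by rintro rfl; simp at hpos)
  rw [neg_mulVec, dotProduct_neg, dotProduct_conjTranspose_mul_mul_mulVec]
  refine Complex.pos_iff.mpr ⟨?_, ?_⟩
  · rw [Complex.neg_re, neg_pos]
    exact neg_of_mul_neg_right hpos.1 hlam
  · rw [Complex.neg_im, eq_comm, neg_eq_zero]
    have him : lam * (star v ⬝ᵥ M *ᵥ v).im = 0 := by linarith [hpos.2]
    exact (mul_eq_zero.mp him).resolve_left hlam'.ne'

theorem re_dotProduct_mulVec_neg_of_posDef_neg {M : Matrix (ι ⊕ κ) (ι ⊕ κ) ℂ} {z : ℂ}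
    (hzA : IsUnit (z • (1 : Matrix ι ι ℂ) - A))
    (hFDI : (-((stateInputResponse A B z)ᴴ * M * stateInputResponse A B z)).PosDef)
    {v : ι ⊕ κ → ℂ} (hv : fromCols A B *ᵥ v = z • (fromCols 1 0 *ᵥ v)) (hv0 : v ≠ 0) :
    (star v ⬝ᵥ M *ᵥ v).re < 0 := by
  have hvu := (fromCols_mulVec_eq_smul_iff hzA v).mp hv
  have hu : v ∘ Sum.inr ≠ 0 := fun hu => hv0 (by rw [hvu, hu, mulVec_zero])
  have hpos := Complex.pos_iff.mp (hFDI.dotProduct_mulVec_pos hu)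
  rw [neg_mulVec, dotProduct_neg, dotProduct_conjTranspose_mul_mul_mulVec, ← hvu] at hpos
  simpa using hpos.1

theorem exists_posDef_neg_of_forall_posDef_neg {M : Matrix (ι ⊕ κ) (ι ⊕ κ) ℂ}
    (hM : M.IsHermitian) (hA : ∀ z : ℂ, ‖z‖ = 1 → IsUnit (z • (1 : Matrix ι ι ℂ) - A))
    (hFDI : ∀ z : ℂ, ‖z‖ = 1 →
      (-((stateInputResponse A B z)ᴴ * M * stateInputResponse A B z)).PosDef) :
    ∃ P : Matrix ι ι ℂ, P.IsHermitian ∧ ∃ lam : ℝ, 0 ≤ lam ∧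
      (-((fromBlocks A B (1 : Matrix ι ι ℂ) 0)ᴴ * fromBlocks P 0 0 (-P) *
        fromBlocks A B (1 : Matrix ι ι ℂ) 0 + (lam : ℂ) • M)).PosDef := by
  by_contra! hLMI
  simp only [← fromRows_fromCols_eq_fromBlocks A B (1 : Matrix ι ι ℂ) 0,
    conjTranspose_fromRows_mul_fromBlocks_mul_fromRows, Complex.coe_smul] at hLMI
  set E₁ := fromCols A B
  set E₂ := fromCols (1 : Matrix ι ι ℂ) (0 : Matrix ι κ ℂ)
  obtain ⟨Z, hZ, hZ0, hZV, hZM⟩ := exists_posSemidef_of_forall_not_posDef hM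
    ((selfAdjoint.submodule ℝ (Matrix ι ι ℂ)).map (steinMap E₁ E₂))
    (by rintro _ ⟨P, hP, rfl⟩; exact IsHermitian.steinMap hP E₁ E₂)
    (by rintro _ ⟨P, hP, rfl⟩; exact hLMI P hP)
  have hbal := mul_mul_conjTranspose_eq_of_forall_re_trace_mul_steinMap_eq_zero hZ.1
    fun P hP => hZV _ ⟨P, hP, rfl⟩
  obtain ⟨s, R, hR, rfl⟩ := hZ.exists_sum_mul_conjTranspose_eq hbal
  refine hZ0 (sum_mul_conjTranspose_eq_zero_of_re_trace_mul_nonneg (fun z hz j hj => ?_) hZM)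
  refine re_dotProduct_mulVec_neg_of_posDef_neg (hA z (hR z hz).1) (hFDI z (hR z hz).1) ?_ hj
  have hcol := congrArg (· *ᵥ Pi.single j 1) (hR z hz).2
  simp only [smul_mulVec] at hcol
  rwa [← mulVec_mulVec, ← mulVec_mulVec, mulVec_single_one] at hcol

end KYP

end Matrix

/-- Strict discrete-time Kalman–Yakubovich–Popov (KYP) lemma.  For `A` with no
eigenvalue on the unit circle, the frequency-domain inequality
`[(zI−A)⁻¹B ; I]ᴴ M [(zI−A)⁻¹B ; I] ≺ 0` for all `|z| = 1` is equivalent to the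
existence of a Hermitian `P` and `λ ≥ 0` with
`[A B; I 0]ᴴ blockDiag(P,−P) [A B; I 0] + λM ≺ 0`.
Negative definiteness of a matrix `N` is stated as `(-N).PosDef`. -/
theorem discrete_time_KYP_lemma {n m : ℕ}
    (A : Matrix (Fin n) (Fin n) ℂ) (B : Matrix (Fin n) (Fin m) ℂ)
    (M : Matrix (Fin n ⊕ Fin m) (Fin n ⊕ Fin m) ℂ) (hM : M.IsHermitian)
    (hA : ∀ μ ∈ spectrum ℂ A, ‖μ‖ ≠ 1) :
    (∀ z : ℂ, ‖z‖ = 1 →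
      (-((Matrix.fromRows ((z • (1 : Matrix (Fin n) (Fin n) ℂ) - A)⁻¹ * B)
            (1 : Matrix (Fin m) (Fin m) ℂ))ᴴ * M *
          Matrix.fromRows ((z • (1 : Matrix (Fin n) (Fin n) ℂ) - A)⁻¹ * B)
            (1 : Matrix (Fin m) (Fin m) ℂ))).PosDef)
    ↔ (∃ P : Matrix (Fin n) (Fin n) ℂ, P.IsHermitian ∧ ∃ lam : ℝ, 0 ≤ lam ∧
        (-((Matrix.fromBlocks A B (1 : Matrix (Fin n) (Fin n) ℂ) 0)ᴴ *
            Matrix.fromBlocks P 0 0 (-P) *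
            Matrix.fromBlocks A B (1 : Matrix (Fin n) (Fin n) ℂ) 0 +
            (lam : ℂ) • M)).PosDef) := by
  have hunit : ∀ z : ℂ, ‖z‖ = 1 → IsUnit (z • (1 : Matrix (Fin n) (Fin n) ℂ) - A) :=
    fun z hz => by
      by_contra h
      exact hA z (spectrum.mem_iff.mpr (by rwa [Algebra.algebraMap_eq_smul_one])) hz
  exact ⟨exists_posDef_neg_of_forall_posDef_neg hM hunit, fun ⟨P, _, _, hlam, h⟩ z hz =>
    posDef_neg_stateInputResponse_of_posDef_neg hM hz (hunit z hz) P hlam h⟩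
end

section
/- Let A ∈ ℝ^{n×n}, B ∈ ℝ^{n×m}, C ∈ ℝ^{m×n}, D ∈ ℝ^{m×m}, let P ∈ ℝ^{n×n} be symmetric positive definite and let λ ≥ 0 be such that the symmetric matrix [[AᵀPA − P, AᵀPB], [BᵀPA, BᵀPB]] + λ [[0, Cᵀ], [C, D + Dᵀ]] is negative definite. Then there exist ε ∈ (0,1) and c > 0 such that for every pair of sequences x : ℕ → ℝ^n, u : ℕ → ℝ^m satisfying x_{k+1} = A x_k + B u_k and u_kᵀ (C x_k + D u_k) ≥ 0 for all k, one has x_kᵀ P x_k ≤ (1−ε)^k x_0ᵀ P x_0 and ‖x_k‖² ≤ c (1−ε)^k ‖x_0‖² for all k. -/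
/-!
Evaluating the LMI matrix at the stacked vector `(x_k, u_k)` gives
`V(x_{k+1}) - V(x_k) + 2λ u_kᵀ(C x_k + D u_k)` for `V(x) = xᵀPx`. Its negative definiteness,
`λ ≥ 0` and passivity give `V(x_{k+1}) ≤ V(x_k) - α‖x_k‖²`, and `V(x) ≤ β‖x‖²` turns this into
`V(x_{k+1}) ≤ (1 - ε) V(x_k)` with `ε ≤ α/β`. The bound on `‖x_k‖²` follows from
`γ‖x‖² ≤ V(x) ≤ β‖x‖²`, so `c = β/γ`. The constants `α, β, γ` come from the spectra of the
matrices involved via the continuous functional calculus: a positive definite matrix lies above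
`α • 1` for some `α > 0`, and a Hermitian one below `β • 1`.
-/

open Matrix
open scoped MatrixOrder

namespace Matrix

variable {ι κ : Type*} [Fintype ι] [Fintype κ]

lemma dotProduct_self_nonneg (v : ι → ℝ) : 0 ≤ v ⬝ᵥ v := by
  simpa using dotProduct_self_star_nonneg v

lemma dotProduct_mulVec_le_of_le {A B : Matrix ι ι ℝ} (h : A ≤ B) (x : ι → ℝ) :
    x ⬝ᵥ (A *ᵥ x) ≤ x ⬝ᵥ (B *ᵥ x) := by
  have := h.dotProduct_mulVec_nonneg x
  rw [star_trivial, sub_mulVec, dotProduct_sub] at this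
  linarith

lemma dotProduct_algebraMap_mulVec [DecidableEq ι] (r : ℝ) (x : ι → ℝ) :
    x ⬝ᵥ (algebraMap ℝ (Matrix ι ι ℝ) r *ᵥ x) = r * (x ⬝ᵥ x) := by
  rw [algebraMap_eq_diagonal, Pi.algebraMap_def, Algebra.algebraMap_self, RingHom.id_apply]
  simp [dotProduct_smul]

lemma PosDef.exists_pos_mul_dotProduct_self_le [DecidableEq ι] {Q : Matrix ι ι ℝ}
    (hQ : Q.PosDef) : ∃ α > 0, ∀ x, α * (x ⬝ᵥ x) ≤ x ⬝ᵥ (Q *ᵥ x) := by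
  cases isEmpty_or_nonempty ι
  · exact ⟨1, one_pos, fun x => by simp [dotProduct]⟩
  obtain ⟨α, hα, hαQ⟩ : ∃ α > 0, algebraMap ℝ (Matrix ι ι ℝ) α ≤ Q :=
    (CFC.exists_pos_algebraMap_le_iff hQ.isHermitian.isSelfAdjoint).mpr
      fun _ hx => hQ.isStrictlyPositive.spectrum_pos hx
  exact ⟨α, hα, fun x => dotProduct_algebraMap_mulVec α x ▸ dotProduct_mulVec_le_of_le hαQ x⟩

lemma IsHermitian.exists_dotProduct_mulVec_le [DecidableEq ι] {Q : Matrix ι ι ℝ}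
    (hQ : Q.IsHermitian) : ∃ β > 0, ∀ x, x ⬝ᵥ (Q *ᵥ x) ≤ β * (x ⬝ᵥ x) := by
  cases isEmpty_or_nonempty ι
  · exact ⟨1, one_pos, fun x => by simp [dotProduct]⟩
  obtain ⟨b, hb⟩ : BddAbove (spectrum ℝ Q) :=
    (isCompact_iff_compactSpace.mpr inferInstance).bddAbove
  have hQb : Q ≤ algebraMap ℝ (Matrix ι ι ℝ) (max b 1) :=
    (le_algebraMap_iff_spectrum_le hQ.isSelfAdjoint).mpr
      fun _ hx => (hb hx).trans (le_max_left _ _)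
  exact ⟨max b 1, by positivity,
    fun x => dotProduct_algebraMap_mulVec (max b 1) x ▸ dotProduct_mulVec_le_of_le hQb x⟩

lemma sumElim_dotProduct_fromBlocks_mulVec (M₁₁ : Matrix ι ι ℝ) (M₁₂ : Matrix ι κ ℝ)
    (M₂₁ : Matrix κ ι ℝ) (M₂₂ : Matrix κ κ ℝ) (x : ι → ℝ) (u : κ → ℝ) :
    Sum.elim x u ⬝ᵥ (fromBlocks M₁₁ M₁₂ M₂₁ M₂₂ *ᵥ Sum.elim x u) =
      x ⬝ᵥ (M₁₁ *ᵥ x) + x ⬝ᵥ (M₁₂ *ᵥ u) + u ⬝ᵥ (M₂₁ *ᵥ x) + u ⬝ᵥ (M₂₂ *ᵥ u) := by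
  rw [fromBlocks_mulVec, sumElim_dotProduct_sumElim, dotProduct_add, dotProduct_add, ← add_assoc,
    Sum.elim_comp_inl, Sum.elim_comp_inr]

lemma dotProduct_transpose_mul_mul_mulVec {l l' : Type*} [Fintype l] [Fintype l']
    (A : Matrix l ι ℝ) (P : Matrix l l' ℝ) (B : Matrix l' κ ℝ) (x : ι → ℝ) (u : κ → ℝ) :
    x ⬝ᵥ ((Aᵀ * P * B) *ᵥ u) = (A *ᵥ x) ⬝ᵥ (P *ᵥ (B *ᵥ u)) := by
  rw [← mulVec_mulVec, ← mulVec_mulVec, dotProduct_transpose_mulVec, dotProduct_comm]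

end Matrix

section Passivity

variable {ι κ : Type*} [Fintype ι] [Fintype κ]

def passivityLMI (A : Matrix ι ι ℝ) (B : Matrix ι κ ℝ) (C : Matrix κ ι ℝ) (D : Matrix κ κ ℝ)
    (P : Matrix ι ι ℝ) (lam : ℝ) : Matrix (ι ⊕ κ) (ι ⊕ κ) ℝ :=
  fromBlocks (Aᵀ * P * A - P) (Aᵀ * P * B) (Bᵀ * P * A) (Bᵀ * P * B) +
    lam • fromBlocks 0 Cᵀ C (D + Dᵀ)

lemma sumElim_dotProduct_passivityLMI_mulVec (A : Matrix ι ι ℝ) (B : Matrix ι κ ℝ)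
    (C : Matrix κ ι ℝ) (D : Matrix κ κ ℝ) (P : Matrix ι ι ℝ) (lam : ℝ) (x : ι → ℝ) (u : κ → ℝ) :
    Sum.elim x u ⬝ᵥ (passivityLMI A B C D P lam *ᵥ Sum.elim x u) =
      (A *ᵥ x + B *ᵥ u) ⬝ᵥ (P *ᵥ (A *ᵥ x + B *ᵥ u)) - x ⬝ᵥ (P *ᵥ x) +
        2 * lam * (u ⬝ᵥ (C *ᵥ x + D *ᵥ u)) := by
  simp only [passivityLMI, add_mulVec, smul_mulVec, dotProduct_add, dotProduct_smul,
    sumElim_dotProduct_fromBlocks_mulVec, sub_mulVec, dotProduct_sub,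
    dotProduct_transpose_mul_mul_mulVec, dotProduct_transpose_mulVec, zero_mulVec,
    dotProduct_zero, mulVec_add, add_dotProduct, smul_eq_mul]
  ring

lemma dotProduct_mulVec_step_le_of_passivityLMI {A : Matrix ι ι ℝ} {B : Matrix ι κ ℝ}
    {C : Matrix κ ι ℝ} {D : Matrix κ κ ℝ} {P : Matrix ι ι ℝ} {lam α : ℝ} (hlam : 0 ≤ lam)
    (hα : 0 ≤ α) (hLMI : ∀ z, α * (z ⬝ᵥ z) ≤ z ⬝ᵥ (-passivityLMI A B C D P lam *ᵥ z))
    {x : ι → ℝ} {u : κ → ℝ} (hu : 0 ≤ u ⬝ᵥ (C *ᵥ x + D *ᵥ u)) :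
    (A *ᵥ x + B *ᵥ u) ⬝ᵥ (P *ᵥ (A *ᵥ x + B *ᵥ u)) ≤ x ⬝ᵥ (P *ᵥ x) - α * (x ⬝ᵥ x) := by
  have h := hLMI (Sum.elim x u)
  rw [neg_mulVec, dotProduct_neg, sumElim_dotProduct_passivityLMI_mulVec,
    sumElim_dotProduct_sumElim] at h
  nlinarith [mul_nonneg hlam hu, mul_nonneg hα (dotProduct_self_nonneg u)]

end Passivity

lemma le_pow_mul_of_le_mul_succ {R : Type*} [Semiring R] [PartialOrder R] [IsOrderedRing R]
    {V : ℕ → R} {r : R} (hr : 0 ≤ r) (h : ∀ k, V (k + 1) ≤ r * V k) (k : ℕ) :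
    V k ≤ r ^ k * V 0 := by
  induction k with
  | zero => simp
  | succ k ih =>
    calc V (k + 1) ≤ r * V k := h k
      _ ≤ r * (r ^ k * V 0) := mul_le_mul_of_nonneg_left ih hr
      _ = r ^ (k + 1) * V 0 := by rw [pow_succ', mul_assoc]

/-- Exponential decay from the strict passivity LMI: if `P ≻ 0`, `λ ≥ 0` and
`[[AᵀPA − P, AᵀPB], [BᵀPA, BᵀPB]] + λ[[0, Cᵀ], [C, D+Dᵀ]] ≺ 0`, then there are
`ε ∈ (0,1)` and `c > 0` such that every trajectory `x_{k+1} = A x_k + B u_k`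
satisfying the pointwise passivity condition `u_kᵀ(C x_k + D u_k) ≥ 0` obeys
`x_kᵀPx_k ≤ (1−ε)^k x_0ᵀPx_0` and `‖x_k‖² ≤ c (1−ε)^k ‖x_0‖²` (Euclidean norm,
written as a sum of squares). -/
theorem passivity_exponential_decay {n m : ℕ}
    (A : Matrix (Fin n) (Fin n) ℝ) (B : Matrix (Fin n) (Fin m) ℝ)
    (C : Matrix (Fin m) (Fin n) ℝ) (D : Matrix (Fin m) (Fin m) ℝ)
    (P : Matrix (Fin n) (Fin n) ℝ) (hP : P.PosDef)
    (lam : ℝ) (hlam : 0 ≤ lam)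
    (hLMI : (-(Matrix.fromBlocks (Aᵀ * P * A - P) (Aᵀ * P * B) (Bᵀ * P * A) (Bᵀ * P * B) +
        lam • Matrix.fromBlocks 0 Cᵀ C (D + Dᵀ))).PosDef) :
    ∃ ε : ℝ, ε ∈ Set.Ioo (0 : ℝ) 1 ∧ ∃ c : ℝ, 0 < c ∧
      ∀ (x : ℕ → Fin n → ℝ) (u : ℕ → Fin m → ℝ),
        (∀ k : ℕ, x (k + 1) = A *ᵥ x k + B *ᵥ u k) →
        (∀ k : ℕ, 0 ≤ u k ⬝ᵥ (C *ᵥ x k + D *ᵥ u k)) →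
        ∀ k : ℕ,
          x k ⬝ᵥ (P *ᵥ x k) ≤ (1 - ε) ^ k * (x 0 ⬝ᵥ (P *ᵥ x 0)) ∧
          (∑ i : Fin n, x k i ^ 2) ≤ c * (1 - ε) ^ k * ∑ i : Fin n, x 0 i ^ 2 := by
  obtain ⟨α, hα, hαM⟩ :=
    PosDef.exists_pos_mul_dotProduct_self_le (Q := -passivityLMI A B C D P lam) hLMI
  obtain ⟨γ, hγ, hγP⟩ := hP.exists_pos_mul_dotProduct_self_le
  obtain ⟨β, hβ, hβP⟩ := hP.isHermitian.exists_dotProduct_mulVec_le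
  set ε := min (α / β) (1 / 2)
  have hε : ε ∈ Set.Ioo (0 : ℝ) 1 := ⟨by positivity, (min_le_right _ _).trans_lt (by norm_num)⟩
  have hr : 0 ≤ 1 - ε := sub_nonneg.2 hε.2.le
  refine ⟨ε, hε, β / γ, div_pos hβ hγ, fun x u hx hu k => ?_⟩
  have contraction : ∀ k, x (k + 1) ⬝ᵥ (P *ᵥ x (k + 1)) ≤ (1 - ε) * (x k ⬝ᵥ (P *ᵥ x k)) := by
    intro k
    have hV : 0 ≤ x k ⬝ᵥ (P *ᵥ x k) :=
      (mul_nonneg hγ.le (dotProduct_self_nonneg _)).trans (hγP _)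
    have hεV : ε * (x k ⬝ᵥ (P *ᵥ x k)) ≤ α * (x k ⬝ᵥ x k) := calc
      ε * (x k ⬝ᵥ (P *ᵥ x k)) ≤ α / β * (β * (x k ⬝ᵥ x k)) :=
        mul_le_mul (min_le_left _ _) (hβP _) hV (by positivity)
      _ = α * (x k ⬝ᵥ x k) := by field_simp
    linarith [hx k ▸ dotProduct_mulVec_step_le_of_passivityLMI hlam hα.le hαM (hu k)]
  have decay := le_pow_mul_of_le_mul_succ (V := fun k => x k ⬝ᵥ (P *ᵥ x k)) hr contraction k
  refine ⟨decay, ?_⟩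
  have sum_sq_eq : ∀ v : Fin n → ℝ, ∑ i, v i ^ 2 = v ⬝ᵥ v := fun v => by simp [dotProduct, sq]
  rw [sum_sq_eq, sum_sq_eq, div_mul_eq_mul_div, div_mul_eq_mul_div, le_div_iff₀ hγ]
  calc x k ⬝ᵥ x k * γ ≤ (1 - ε) ^ k * (x 0 ⬝ᵥ (P *ᵥ x 0)) := by linarith [hγP (x k)]
    _ ≤ (1 - ε) ^ k * (β * (x 0 ⬝ᵥ x 0)) := mul_le_mul_of_nonneg_left (hβP _) (pow_nonneg hr k)
    _ = β * (1 - ε) ^ k * (x 0 ⬝ᵥ x 0) := by ring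
end

section
/- Let A ∈ ℝ^{n×n} and B ∈ ℝ^{n×p} be matrices, let m ≥ 1 be such that A^m = 0, and let x : ℕ → ℝ^n, h : ℕ → ℝ^p satisfy x_{k+1} = A x_k + B h_k for all k. Let ρ ∈ (0,1), c ≥ 0 and γ ≥ 0 be such that ‖h_k‖ ≤ c ρ^k for all k, and ‖A^i B v‖ ≤ γ ‖v‖ for all 0 ≤ i < m and all v ∈ ℝ^p. Then for every k ≥ m, ‖x_k‖ ≤ γ c ((ρ^{−m} − 1)/(1 − ρ)) ρ^k. -/
open Matrix

lemma toEuclideanLin_mul_apply {n p q : ℕ} (M : Matrix (Fin n) (Fin p) ℝ)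
    (N : Matrix (Fin p) (Fin q) ℝ) (v : EuclideanSpace ℝ (Fin q)) :
    Matrix.toEuclideanLin (M * N) v = Matrix.toEuclideanLin M (Matrix.toEuclideanLin N v) := by
  simp [Matrix.toEuclideanLin_eq_toLin, Matrix.toLin_mul _ (PiLp.basisFun 2 ℝ (Fin p)) _]

lemma toEuclideanLin_one_apply {n : ℕ} (v : EuclideanSpace ℝ (Fin n)) :
    Matrix.toEuclideanLin (1 : Matrix (Fin n) (Fin n) ℝ) v = v := by
  simp [Matrix.toEuclideanLin_eq_toLin, Matrix.toLin_one]

/-- Quantitative exponential state bound from nilpotency: if `A^m = 0`,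
`x_{k+1} = A x_k + B h_k`, the inputs decay geometrically (`‖h_k‖ ≤ c ρ^k`) and
`‖A^i B v‖ ≤ γ‖v‖` for `0 ≤ i < m`, then for `k ≥ m`,
`‖x_k‖ ≤ γ c ((ρ^{−m} − 1)/(1 − ρ)) ρ^k`.  Vectors live in Euclidean space and
the matrices act via `Matrix.toEuclideanLin`, so `‖·‖` is the Euclidean norm. -/
theorem nilpotent_exponential_state_bound {n p : ℕ}
    (A : Matrix (Fin n) (Fin n) ℝ) (B : Matrix (Fin n) (Fin p) ℝ)
    (m : ℕ) (hm : 1 ≤ m) (hnil : A ^ m = 0)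
    (x : ℕ → EuclideanSpace ℝ (Fin n)) (h : ℕ → EuclideanSpace ℝ (Fin p))
    (hdyn : ∀ k : ℕ, x (k + 1) =
      Matrix.toEuclideanLin A (x k) + Matrix.toEuclideanLin B (h k))
    (ρ : ℝ) (hρ : ρ ∈ Set.Ioo (0 : ℝ) 1)
    (c : ℝ) (hc : 0 ≤ c)
    (γ : ℝ) (hγ : 0 ≤ γ)
    (hh : ∀ k : ℕ, ‖h k‖ ≤ c * ρ ^ k)
    (hAB : ∀ i : ℕ, i < m → ∀ v : EuclideanSpace ℝ (Fin p),
      ‖Matrix.toEuclideanLin (A ^ i * B) v‖ ≤ γ * ‖v‖) :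
    ∀ k : ℕ, m ≤ k →
      ‖x k‖ ≤ γ * c * ((ρ ^ (-(m : ℤ)) - 1) / (1 - ρ)) * ρ ^ k := by
  obtain ⟨hρ0, hρ1⟩ := hρ
  -- state formula by induction on j
  have key : ∀ j t : ℕ, x (t + j) = Matrix.toEuclideanLin (A ^ j) (x t) +
      ∑ i ∈ Finset.range j, Matrix.toEuclideanLin (A ^ i * B) (h (t + j - 1 - i)) := by
    intro j
    induction j with
    | zero => intro t; simp [toEuclideanLin_one_apply]
    | succ j ih =>
      intro t
      have : t + (j + 1) = (t + j) + 1 := by ring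
      rw [this, hdyn (t + j), ih t, map_add, map_sum, Finset.sum_range_succ']
      have h1 : Matrix.toEuclideanLin A (Matrix.toEuclideanLin (A ^ j) (x t))
          = Matrix.toEuclideanLin (A ^ (j + 1)) (x t) := by
        rw [pow_succ', toEuclideanLin_mul_apply]
      have h2 : ∀ i ∈ Finset.range j,
          Matrix.toEuclideanLin (A ^ (i + 1) * B) (h (t + j + 1 - 1 - (i + 1)))
          = Matrix.toEuclideanLin A (Matrix.toEuclideanLin (A ^ i * B) (h (t + j - 1 - i))) := by
        intro i hi
        have hidx : t + j + 1 - 1 - (i + 1) = t + j - 1 - i := by omega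
        rw [hidx, ← toEuclideanLin_mul_apply, ← Matrix.mul_assoc, ← pow_succ']
      have h3 : Matrix.toEuclideanLin (A ^ 0 * B) (h (t + j + 1 - 1 - 0))
          = Matrix.toEuclideanLin B (h (t + j)) := by
        simp
      rw [h1, Finset.sum_congr rfl h2, h3]
      abel
  intro k hk
  have hxk : x k = ∑ i ∈ Finset.range m, Matrix.toEuclideanLin (A ^ i * B) (h (k - 1 - i)) := by
    have := key m (k - m)
    rw [Nat.sub_add_cancel hk] at this
    rw [this, hnil]
    simp
  rw [hxk]
  calc ‖∑ i ∈ Finset.range m, Matrix.toEuclideanLin (A ^ i * B) (h (k - 1 - i))‖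
      ≤ ∑ i ∈ Finset.range m, ‖Matrix.toEuclideanLin (A ^ i * B) (h (k - 1 - i))‖ :=
        norm_sum_le _ _
    _ ≤ ∑ i ∈ Finset.range m, γ * (c * ρ ^ (k - 1 - i)) := by
        apply Finset.sum_le_sum
        intro i hi
        exact le_trans (hAB i (Finset.mem_range.mp hi) _)
          (mul_le_mul_of_nonneg_left (hh _) hγ)
    _ = γ * c * ∑ i ∈ Finset.range m, ρ ^ (k - 1 - i) := by
        rw [Finset.mul_sum]; ring_nf
    _ ≤ γ * c * ((ρ ^ (-(m : ℤ)) - 1) / (1 - ρ) * ρ ^ k) := by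
        apply mul_le_mul_of_nonneg_left _ (mul_nonneg hγ hc)
        have hρne : ρ ≠ 0 := ne_of_gt hρ0
        have hsum : ∑ i ∈ Finset.range m, ρ ^ (k - 1 - i)
            = ∑ i ∈ Finset.range m, ρ ^ k * ρ⁻¹ ^ (i + 1) := by
          apply Finset.sum_congr rfl
          intro i hi
          have hi' : i < m := Finset.mem_range.mp hi
          have : k - 1 - i + (i + 1) = k := by omega
          rw [inv_pow, eq_comm, mul_inv_eq_iff_eq_mul₀ (pow_ne_zero _ hρne), ← pow_add, this]
        rw [hsum, ← Finset.mul_sum]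
        have hgeom : ∑ i ∈ Finset.range m, ρ⁻¹ ^ (i + 1)
            = (ρ ^ (-(m : ℤ)) - 1) / (1 - ρ) := by
          have hr1 : (ρ⁻¹ : ℝ) ≠ 1 := by
            intro hcon
            have : ρ = 1 := by
              field_simp at hcon
              linarith [hcon]
            linarith
          have := geom_sum_eq hr1 m
          calc ∑ i ∈ Finset.range m, ρ⁻¹ ^ (i + 1)
              = ρ⁻¹ * ∑ i ∈ Finset.range m, ρ⁻¹ ^ i := by
                rw [Finset.mul_sum]
                exact Finset.sum_congr rfl (fun i _ => by rw [pow_succ, mul_comm])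
            _ = ρ⁻¹ * ((ρ⁻¹ ^ m - 1) / (ρ⁻¹ - 1)) := by rw [this]
            _ = (ρ ^ (-(m : ℤ)) - 1) / (1 - ρ) := by
                rw [_root_.zpow_neg, zpow_natCast, ← inv_pow]
                have h1 : ρ⁻¹ - 1 ≠ 0 := sub_ne_zero.mpr hr1
                have h2 : (1 : ℝ) - ρ ≠ 0 := by
                  intro hc0
                  have := sub_eq_zero.mp hc0
                  linarith
                field_simp
        rw [hgeom, mul_comm]
    _ = γ * c * ((ρ ^ (-(m : ℤ)) - 1) / (1 - ρ)) * ρ ^ k := by ring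
end
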